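/- arXiv:2105.05439 — 5 statements merged into one kernel-verified Lean document; each statement's English description precedes it below -/
import Mathlib

section
/- The L¹ distance between two transport maps equals the L¹ distance between their generalized inverses: for all S,T∈𝒯, ∫_𝒮 |S(x)−T(x)| dx = ∫_𝒮 |S⁻¹(x)−T⁻¹(x)| dx. -/
open MeasureTheory ProbabilityTheory Filter Topology

noncomputable section

namespace ATM

/-- The space 𝒯 of transport maps on [s₁, s₂]: non-decreasing self-maps of
[s₁, s₂] fixing the endpoints. -/
def IsTransport (s₁ s₂ : ℝ) (T : ℝ → ℝ) : Prop :=
  MonotoneOn T (Set.Icc s₁ s₂) ∧ Set.MapsTo T (Set.Icc s₁ s₂) (Set.Icc s₁ s₂) ∧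
    T s₁ = s₁ ∧ T s₂ = s₂

/-- Generalized (left-continuous) inverse T⁻¹(x) = inf{y ∈ [s₁,s₂] : T(y) ≥ x}. -/
def geninv (s₁ s₂ : ℝ) (T : ℝ → ℝ) : ℝ → ℝ :=
  fun x => sInf {y | y ∈ Set.Icc s₁ s₂ ∧ x ≤ T y}

/-- L¹ distance d₁(S,T) = ∫_𝒮 |S-T| dλ. -/
def d1 (s₁ s₂ : ℝ) (S T : ℝ → ℝ) : ℝ := ∫ x in s₁..s₂, |S x - T x|

/-- L^q distance d_q(S,T) = (∫_𝒮 |S-T|^q dλ)^{1/q}. -/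
def dq (s₁ s₂ q : ℝ) (S T : ℝ → ℝ) : ℝ := (∫ x in s₁..s₂, |S x - T x| ^ q) ^ (1 / q)

/-- Sup distance d_∞(S,T) = sup_{x ∈ 𝒮} |S(x) - T(x)|. -/
def dinf (s₁ s₂ : ℝ) (S T : ℝ → ℝ) : ℝ := ⨆ x : Set.Icc s₁ s₂, |S x.1 - T x.1|

/-- Addition on 𝒯: T₁ ⊕ T₂ = T₂ ∘ T₁. -/
def oplus (T₁ T₂ : ℝ → ℝ) : ℝ → ℝ := T₂ ∘ T₁

/-- Scalar multiplication α ⊙ T for -1 ≤ α ≤ 1. -/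
def oneSmul (s₁ s₂ α : ℝ) (T : ℝ → ℝ) : ℝ → ℝ := fun x =>
  if 0 < α then x + α * (T x - x)
  else if α = 0 then x
  else x + α * (x - geninv s₁ s₂ T x)

/-- Scalar multiplication α ⊙ T for general α, via b = ⌊|α|⌋, a = |α| - b. -/
def odot (s₁ s₂ α : ℝ) (T : ℝ → ℝ) : ℝ → ℝ :=
  if |α| ≤ 1 then oneSmul s₁ s₂ α T
  else if 0 < α then (oneSmul s₁ s₂ (Int.fract α) T) ∘ T^[(⌊α⌋).toNat]
  else (oneSmul s₁ s₂ (Int.fract |α|) (geninv s₁ s₂ T)) ∘ (geninv s₁ s₂ T)^[(⌊|α|⌋).toNat]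

variable {Ω : Type*}

/-- φ_e(S) = α ⊙ S ⊕ e = e ∘ (α ⊙ S). -/
def phi (s₁ s₂ α : ℝ) (e S : ℝ → ℝ) : ℝ → ℝ := e ∘ odot s₁ s₂ α S

/-- Iterated random maps φ̃_{i,m}(S) = φ_{ε_i} ∘ ⋯ ∘ φ_{ε_{i-m+1}}(S). -/
def phiIter (s₁ s₂ α : ℝ) (ε : ℤ → Ω → ℝ → ℝ) : ℕ → ℤ → (ℝ → ℝ) → Ω → ℝ → ℝ
  | 0, _, S, _ => S
  | m + 1, i, S, ω => phi s₁ s₂ α (ε i ω) (phiIter s₁ s₂ α ε m (i - 1) S ω)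

/-- Concurrent scalar multiplication β ⊛ T for β : 𝒮 → [-1,1]. -/
def bsmul (s₁ s₂ : ℝ) (β T : ℝ → ℝ) : ℝ → ℝ := fun x =>
  if 0 < β x then x + β x * (T x - x)
  else if β x = 0 then x
  else x + β x * (x - geninv s₁ s₂ T x)

/-- φ_e(S) = β ⊛ S ⊕ e for the concurrent model. -/
def cphi (s₁ s₂ : ℝ) (β e S : ℝ → ℝ) : ℝ → ℝ := e ∘ bsmul s₁ s₂ β S

/-- Iterated random maps for the concurrent model. -/
def cphiIter (s₁ s₂ : ℝ) (β : ℝ → ℝ) (ε : ℤ → Ω → ℝ → ℝ) : ℕ → ℤ → (ℝ → ℝ) → Ω → ℝ → ℝ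
  | 0, _, S, _ => S
  | m + 1, i, S, ω => cphi s₁ s₂ β (ε i ω) (cphiIter s₁ s₂ β ε m (i - 1) S ω)

/-- The chain α_p ⊙ S₁ ⊕ α_{p-1} ⊙ S₂ ⊕ ⋯ ⊕ α₁ ⊙ S_p, where `a k` denotes α_{k+1}
and `S k` denotes S_{k+1} (0-based). Since A ⊕ B = B ∘ A, the map α_p ⊙ S₁ acts first. -/
def atmChain (s₁ s₂ : ℝ) {p : ℕ} (a : Fin p → ℝ) (S : Fin p → ℝ → ℝ) : ℝ → ℝ :=
  fun x => Fin.foldl p (fun y k => odot s₁ s₂ (a k.rev) (S k) y) x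

/-- Υ_e(𝐒) = (S₂, …, S_p, α_p ⊙ S₁ ⊕ ⋯ ⊕ α₁ ⊙ S_p ⊕ e). -/
def upsilon (s₁ s₂ : ℝ) {p : ℕ} (a : Fin p → ℝ) (e : ℝ → ℝ) (S : Fin p → ℝ → ℝ) :
    Fin p → ℝ → ℝ :=
  fun j => if h : (j : ℕ) + 1 < p then S ⟨(j : ℕ) + 1, h⟩ else e ∘ atmChain s₁ s₂ a S

/-- Iterated random maps Υ̃_{i,m}(𝐒) = Υ_{ε_i} ∘ ⋯ ∘ Υ_{ε_{i-m+1}}(𝐒). -/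
def upsilonIter (s₁ s₂ : ℝ) {p : ℕ} (a : Fin p → ℝ) (ε : ℤ → Ω → ℝ → ℝ) :
    ℕ → ℤ → (Fin p → ℝ → ℝ) → Ω → Fin p → ℝ → ℝ
  | 0, _, S, _ => S
  | m + 1, i, S, ω => upsilon s₁ s₂ a (ε i ω) (upsilonIter s₁ s₂ a ε m (i - 1) S ω)

/-- Product L^q metric on 𝒯^p. -/
def dqProd (s₁ s₂ q : ℝ) {p : ℕ} (S R : Fin p → ℝ → ℝ) : ℝ :=
  Real.sqrt (∑ k, (dq s₁ s₂ q (S k) (R k)) ^ 2)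

/-- Product L¹ metric on 𝒯^p. -/
def d1Prod (s₁ s₂ : ℝ) {p : ℕ} (S R : Fin p → ℝ → ℝ) : ℝ :=
  Real.sqrt (∑ k, (d1 s₁ s₂ (S k) (R k)) ^ 2)

/-- Joint measurability of a random function. -/
def JM [MeasurableSpace Ω] (f : Ω → ℝ → ℝ) : Prop :=
  Measurable fun q : Ω × ℝ => f q.1 q.2

/-- (ε_i)_{i ∈ ℤ} are i.i.d. random elements. -/
def IID [MeasurableSpace Ω] (P : Measure Ω) (ε : ℤ → Ω → ℝ → ℝ) : Prop :=
  iIndepFun ε P ∧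
    ∀ i j : ℤ, Measure.map (ε i) P = Measure.map (ε j) P

/-- Stationarity of a ℤ-indexed function-valued process: shift invariance of the joint law. -/
def Stationary [MeasurableSpace Ω] (P : Measure Ω) (X : ℤ → Ω → ℝ → ℝ) : Prop :=
  Measure.map (fun ω => fun i : ℤ => X (i + 1) ω) P =
    Measure.map (fun ω => fun i : ℤ => X i ω) P

/-- Completeness of a class of maps under the sup metric d_∞ on [s₁,s₂]. -/
def CompleteUnder (s₁ s₂ : ℝ) (TT : Set (ℝ → ℝ)) : Prop :=
  ∀ f : ℕ → ℝ → ℝ, (∀ n, f n ∈ TT) →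
    (∀ δ : ℝ, 0 < δ → ∃ N, ∀ m ≥ N, ∀ n ≥ N, dinf s₁ s₂ (f m) (f n) < δ) →
    ∃ g ∈ TT, Tendsto (fun n => dinf s₁ s₂ (f n) g) atTop (𝓝 0)

/-- Bi-Lipschitz with constant K on [s₁,s₂]. -/
def BiLipschitzOn (s₁ s₂ K : ℝ) (T : ℝ → ℝ) : Prop :=
  ∀ x ∈ Set.Icc s₁ s₂, ∀ y ∈ Set.Icc s₁ s₂,
    K⁻¹ * |x - y| ≤ |T x - T y| ∧ |T x - T y| ≤ K * |x - y|

/-- Empirical least-squares criterion l₊. -/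
def lplusD (s₁ s₂ : ℝ) (F : ℕ → ℝ → ℝ) (n : ℕ) (a : ℝ) : ℝ :=
  ∑ i ∈ Finset.Icc 2 n, ∫ x in s₁..s₂, (F i x - x - a * (F (i - 1) x - x)) ^ 2

/-- Empirical least-squares criterion l₋. -/
def lminusD (s₁ s₂ : ℝ) (F : ℕ → ℝ → ℝ) (n : ℕ) (a : ℝ) : ℝ :=
  ∑ i ∈ Finset.Icc 2 n, ∫ x in s₁..s₂,
    (F i x - x - a * (x - geninv s₁ s₂ (F (i - 1)) x)) ^ 2

/-- Empirical autocovariance ρ̂¹₊. -/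
def rho1pD (s₁ s₂ : ℝ) (F : ℕ → ℝ → ℝ) (n : ℕ) : ℝ :=
  (1 / ((n : ℝ) - 1)) * ∑ i ∈ Finset.Icc 2 n, ∫ x in s₁..s₂, (F i x - x) * (F (i - 1) x - x)

/-- Empirical autocovariance ρ̂¹₋. -/
def rho1mD (s₁ s₂ : ℝ) (F : ℕ → ℝ → ℝ) (n : ℕ) : ℝ :=
  (1 / ((n : ℝ) - 1)) * ∑ i ∈ Finset.Icc 2 n, ∫ x in s₁..s₂,
    (F i x - x) * (x - geninv s₁ s₂ (F (i - 1)) x)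

/-- Empirical second moment ρ̂⁰₊. -/
def rho0pD (s₁ s₂ : ℝ) (F : ℕ → ℝ → ℝ) (n : ℕ) : ℝ :=
  (1 / ((n : ℝ) - 1)) * ∑ i ∈ Finset.Icc 2 n, ∫ x in s₁..s₂, (F (i - 1) x - x) ^ 2

/-- Empirical second moment ρ̂⁰₋. -/
def rho0mD (s₁ s₂ : ℝ) (F : ℕ → ℝ → ℝ) (n : ℕ) : ℝ :=
  (1 / ((n : ℝ) - 1)) * ∑ i ∈ Finset.Icc 2 n, ∫ x in s₁..s₂,
    (x - geninv s₁ s₂ (F (i - 1)) x) ^ 2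

/-- Pointwise least-squares criterion l₊(·|x). -/
def lplusPt (F : ℕ → ℝ → ℝ) (n : ℕ) (x a : ℝ) : ℝ :=
  ∑ i ∈ Finset.Icc 2 n, (F i x - x - a * (F (i - 1) x - x)) ^ 2

/-- Pointwise least-squares criterion l₋(·|x). -/
def lminusPt (s₁ s₂ : ℝ) (F : ℕ → ℝ → ℝ) (n : ℕ) (x a : ℝ) : ℝ :=
  ∑ i ∈ Finset.Icc 2 n, (F i x - x - a * (x - geninv s₁ s₂ (F (i - 1)) x)) ^ 2

/-- Pointwise empirical autocovariance ρ̂¹₊(x). -/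
def rho1pPt (F : ℕ → ℝ → ℝ) (n : ℕ) (x : ℝ) : ℝ :=
  (1 / ((n : ℝ) - 1)) * ∑ i ∈ Finset.Icc 2 n, (F i x - x) * (F (i - 1) x - x)

/-- Pointwise empirical autocovariance ρ̂¹₋(x). -/
def rho1mPt (s₁ s₂ : ℝ) (F : ℕ → ℝ → ℝ) (n : ℕ) (x : ℝ) : ℝ :=
  (1 / ((n : ℝ) - 1)) * ∑ i ∈ Finset.Icc 2 n, (F i x - x) * (x - geninv s₁ s₂ (F (i - 1)) x)

/-- Pointwise empirical second moment ρ̂⁰₊(x). -/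
def rho0pPt (F : ℕ → ℝ → ℝ) (n : ℕ) (x : ℝ) : ℝ :=
  (1 / ((n : ℝ) - 1)) * ∑ i ∈ Finset.Icc 2 n, (F (i - 1) x - x) ^ 2

/-- Pointwise empirical second moment ρ̂⁰₋(x). -/
def rho0mPt (s₁ s₂ : ℝ) (F : ℕ → ℝ → ℝ) (n : ℕ) (x : ℝ) : ℝ :=
  (1 / ((n : ℝ) - 1)) * ∑ i ∈ Finset.Icc 2 n, (x - geninv s₁ s₂ (F (i - 1)) x) ^ 2


/-!
Both sides are the area between the graphs of `S` and `T` in the square `[s₁, s₂]²`, read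
horizontally or vertically. Concretely, `|S - T| = S ⊔ T - S ⊓ T`, the generalized inverse
exchanges `⊔` and `⊓`, and for a single transport map the area under the graph and the area to
the left of it fill the square (`∫ T + ∫ T⁻¹ = s₂² - s₁²`), so the two distances are
the same difference of areas.
-/

open MeasureTheory Set
open scoped ENNReal

def superlevelSet (s₁ s₂ : ℝ) (T : ℝ → ℝ) (t : ℝ) : Set ℝ :=
  {y | y ∈ Icc s₁ s₂ ∧ t ≤ T y}

section Geninv

variable {s₁ s₂ t x : ℝ} {S T : ℝ → ℝ}

theorem geninv_eq_sInf : geninv s₁ s₂ T t = sInf (superlevelSet s₁ s₂ T t) := rfl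

theorem bddBelow_superlevelSet : BddBelow (superlevelSet s₁ s₂ T t) :=
  ⟨s₁, fun _ hy => hy.1.1⟩

theorem right_mem_superlevelSet (hs : s₁ ≤ s₂) (ht : t ≤ T s₂) :
    s₂ ∈ superlevelSet s₁ s₂ T t :=
  ⟨right_mem_Icc.2 hs, ht⟩

theorem geninv_le (hx : x ∈ Icc s₁ s₂) (h : t ≤ T x) : geninv s₁ s₂ T t ≤ x :=
  csInf_le bddBelow_superlevelSet ⟨hx, h⟩

theorem geninv_mem_Icc (hs : s₁ ≤ s₂) (ht : t ≤ T s₂) : geninv s₁ s₂ T t ∈ Icc s₁ s₂ :=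
  ⟨le_csInf ⟨_, right_mem_superlevelSet hs ht⟩ fun _ hy => hy.1.1,
    geninv_le (right_mem_Icc.2 hs) ht⟩

theorem le_of_geninv_lt (hT : MonotoneOn T (Icc s₁ s₂)) (hs : s₁ ≤ s₂) (ht : t ≤ T s₂)
    (hx : x ∈ Icc s₁ s₂) (h : geninv s₁ s₂ T t < x) : t ≤ T x := by
  obtain ⟨y, hy, hyx⟩ := exists_lt_of_csInf_lt ⟨_, right_mem_superlevelSet hs ht⟩ h
  exact hy.2.trans (hT hy.1 hx hyx.le)

theorem monotoneOn_geninv (hs : s₁ ≤ s₂) : MonotoneOn (geninv s₁ s₂ T) (Iic (T s₂)) :=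
  fun _ _ _ hu htu => csInf_le_csInf bddBelow_superlevelSet
    ⟨_, right_mem_superlevelSet hs hu⟩ fun _ hy => ⟨hy.1, htu.trans hy.2⟩

/-- The superlevel set lies between `Ioc (geninv s₁ s₂ T t) s₂` and `Icc (geninv s₁ s₂ T t) s₂`. -/
theorem volume_superlevelSet (hT : MonotoneOn T (Icc s₁ s₂)) (hs : s₁ ≤ s₂) (ht : t ≤ T s₂) :
    volume (superlevelSet s₁ s₂ T t) = ENNReal.ofReal (s₂ - geninv s₁ s₂ T t) := by
  have hg := geninv_mem_Icc hs ht
  refine le_antisymm ?_ ?_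
  · calc volume (superlevelSet s₁ s₂ T t)
        ≤ volume (Icc (geninv s₁ s₂ T t) s₂) :=
          measure_mono fun x hx => ⟨geninv_le hx.1 hx.2, hx.1.2⟩
      _ = _ := Real.volume_Icc
  · calc ENNReal.ofReal (s₂ - geninv s₁ s₂ T t)
        = volume (Ioc (geninv s₁ s₂ T t) s₂) := Real.volume_Ioc.symm
      _ ≤ volume (superlevelSet s₁ s₂ T t) := measure_mono fun x hx =>
          have hxI : x ∈ Icc s₁ s₂ := ⟨hg.1.trans hx.1.le, hx.2⟩
          ⟨hxI, le_of_geninv_lt hT hs ht hxI hx.1⟩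

theorem geninv_sup (hs : s₁ ≤ s₂) (hS : t ≤ S s₂) (hT : t ≤ T s₂) :
    geninv s₁ s₂ (S ⊔ T) t = geninv s₁ s₂ S t ⊓ geninv s₁ s₂ T t := by
  have hunion : superlevelSet s₁ s₂ (S ⊔ T) t =
      superlevelSet s₁ s₂ S t ∪ superlevelSet s₁ s₂ T t := by
    ext y
    simp only [superlevelSet, mem_ofPred_eq, mem_union, Pi.sup_apply, le_sup_iff]
    tauto
  rw [geninv_eq_sInf, hunion, csInf_union bddBelow_superlevelSet
    ⟨_, right_mem_superlevelSet hs hS⟩ bddBelow_superlevelSet ⟨_, right_mem_superlevelSet hs hT⟩]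
  rfl

theorem geninv_inf (hSm : MonotoneOn S (Icc s₁ s₂)) (hTm : MonotoneOn T (Icc s₁ s₂))
    (hs : s₁ ≤ s₂) (hS : t ≤ S s₂) (hT : t ≤ T s₂) :
    geninv s₁ s₂ (S ⊓ T) t = geninv s₁ s₂ S t ⊔ geninv s₁ s₂ T t := by
  have hne : (superlevelSet s₁ s₂ (S ⊓ T) t).Nonempty :=
    ⟨_, right_mem_superlevelSet hs (le_inf hS hT)⟩
  refine le_antisymm (le_of_forall_gt_imp_ge_of_dense fun x hx => ?_) (sup_le ?_ ?_)
  · rcases le_or_gt x s₂ with hxs | hxs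
    · have hxI : x ∈ Icc s₁ s₂ :=
        ⟨(geninv_mem_Icc hs hS).1.trans (le_sup_left.trans_lt hx).le, hxs⟩
      exact geninv_le hxI (le_inf (le_of_geninv_lt hSm hs hS hxI (le_sup_left.trans_lt hx))
        (le_of_geninv_lt hTm hs hT hxI (le_sup_right.trans_lt hx)))
    · exact (geninv_le (T := S ⊓ T) (right_mem_Icc.2 hs) (le_inf hS hT)).trans hxs.le
  · exact csInf_le_csInf bddBelow_superlevelSet hne fun _ hy => ⟨hy.1, hy.2.trans inf_le_left⟩
  · exact csInf_le_csInf bddBelow_superlevelSet hne fun _ hy => ⟨hy.1, hy.2.trans inf_le_right⟩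

end Geninv

theorem intervalIntegral_abs_sub_eq {f g : ℝ → ℝ} {a b : ℝ}
    (hf : IntervalIntegrable f volume a b) (hg : IntervalIntegrable g volume a b) :
    ∫ x in a..b, |f x - g x| = (∫ x in a..b, (f ⊔ g) x) - ∫ x in a..b, (f ⊓ g) x := by
  rw [← intervalIntegral.integral_sub ⟨hf.1.sup hg.1, hf.2.sup hg.2⟩
    ⟨hf.1.inf hg.1, hf.2.inf hg.2⟩]
  exact intervalIntegral.integral_congr fun x _ => (max_sub_min_eq_abs' (f x) (g x)).symm

theorem _root_.MonotoneOn.intervalIntegrable_of_le {f : ℝ → ℝ} {a b : ℝ}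
    (hf : MonotoneOn f (Icc a b)) (hab : a ≤ b) : IntervalIntegrable f volume a b :=
  MonotoneOn.intervalIntegrable (by rwa [uIcc_of_le hab])

namespace IsTransport

variable {s₁ s₂ : ℝ} {S T : ℝ → ℝ}

theorem sup (hS : IsTransport s₁ s₂ S) (hT : IsTransport s₁ s₂ T) :
    IsTransport s₁ s₂ (S ⊔ T) :=
  ⟨fun _ hx _ hy h => max_le_max (hS.1 hx hy h) (hT.1 hx hy h),
    fun _ hx => ⟨le_max_of_le_left (hS.2.1 hx).1, max_le (hS.2.1 hx).2 (hT.2.1 hx).2⟩,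
    by simp [hS.2.2.1, hT.2.2.1], by simp [hS.2.2.2, hT.2.2.2]⟩

theorem inf (hS : IsTransport s₁ s₂ S) (hT : IsTransport s₁ s₂ T) :
    IsTransport s₁ s₂ (S ⊓ T) :=
  ⟨fun _ hx _ hy h => min_le_min (hS.1 hx hy h) (hT.1 hx hy h),
    fun _ hx => ⟨le_min (hS.2.1 hx).1 (hT.2.1 hx).1, min_le_of_left_le (hS.2.1 hx).2⟩,
    by simp [hS.2.2.1, hT.2.2.1], by simp [hS.2.2.2, hT.2.2.2]⟩

theorem monotoneOn_geninv (hT : IsTransport s₁ s₂ T) (hs : s₁ ≤ s₂) :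
    MonotoneOn (geninv s₁ s₂ T) (Icc s₁ s₂) :=
  (ATM.monotoneOn_geninv hs).mono fun _ ht => hT.2.2.2.symm ▸ ht.2

end IsTransport

section Young

variable {s₁ s₂ : ℝ} {T : ℝ → ℝ}

/-- Both sides are the area of the subgraph `{(x, t) | t ≤ T x}` inside `[s₁, s₂]²`, sliced
vertically and horizontally. -/
theorem lintegral_sub_eq_lintegral_sub_geninv (hs : s₁ ≤ s₂) (hT : IsTransport s₁ s₂ T) :
    ∫⁻ x in Icc s₁ s₂, ENNReal.ofReal (T x - s₁) =
      ∫⁻ t in Icc s₁ s₂, ENNReal.ofReal (s₂ - geninv s₁ s₂ T t) := by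
  set μ := volume.restrict (Icc s₁ s₂)
  -- a monotone, hence measurable, extension of `T` off the square
  set eT := IccExtend hs fun x => T x
  have heT : ∀ x ∈ Icc s₁ s₂, eT x = T x := fun x hx => IccExtend_of_mem hs _ hx
  have hR : MeasurableSet {p : ℝ × ℝ | p.2 ≤ eT p.1} :=
    measurableSet_le measurable_snd
      (((monotoneOn_iff_monotone.1 hT.1).IccExtend hs).measurable.comp measurable_fst)
  calc ∫⁻ x in Icc s₁ s₂, ENNReal.ofReal (T x - s₁)
      = ∫⁻ x, μ (Prod.mk x ⁻¹' {p : ℝ × ℝ | p.2 ≤ eT p.1}) ∂μ := by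
        refine setLIntegral_congr_fun measurableSet_Icc fun x hx => ?_
        have hTx := hT.2.1 hx
        have hslice : Prod.mk x ⁻¹' {p : ℝ × ℝ | p.2 ≤ eT p.1} ∩ Icc s₁ s₂ = Icc s₁ (T x) := by
          ext t
          simp only [mem_inter_iff, mem_preimage, mem_ofPred_eq, mem_Icc, heT x hx]
          constructor
          · rintro ⟨h, h₁, -⟩
            exact ⟨h₁, h⟩
          · rintro ⟨h₁, h⟩
            exact ⟨h, h₁, h.trans hTx.2⟩
        rw [Measure.restrict_apply' measurableSet_Icc, hslice, Real.volume_Icc]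
    _ = μ.prod μ {p : ℝ × ℝ | p.2 ≤ eT p.1} := (Measure.prod_apply hR).symm
    _ = ∫⁻ t, μ ((fun x => (x, t)) ⁻¹' {p : ℝ × ℝ | p.2 ≤ eT p.1}) ∂μ :=
        Measure.prod_apply_symm hR
    _ = ∫⁻ t in Icc s₁ s₂, ENNReal.ofReal (s₂ - geninv s₁ s₂ T t) := by
        refine setLIntegral_congr_fun measurableSet_Icc fun t ht => ?_
        have hslice : (fun x => (x, t)) ⁻¹' {p : ℝ × ℝ | p.2 ≤ eT p.1} ∩ Icc s₁ s₂ =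
            superlevelSet s₁ s₂ T t := by
          ext x
          simp only [superlevelSet, mem_inter_iff, mem_preimage, mem_ofPred_eq]
          exact ⟨fun ⟨h, hx⟩ => ⟨hx, heT x hx ▸ h⟩, fun ⟨hx, h⟩ => ⟨(heT x hx).symm ▸ h, hx⟩⟩
        rw [Measure.restrict_apply' measurableSet_Icc, hslice,
          volume_superlevelSet hT.1 hs (hT.2.2.2.symm ▸ ht.2)]

theorem integral_add_integral_geninv (hs : s₁ ≤ s₂) (hT : IsTransport s₁ s₂ T) :
    (∫ x in s₁..s₂, T x) + ∫ t in s₁..s₂, geninv s₁ s₂ T t = s₂ ^ 2 - s₁ ^ 2 := by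
  have hTint : IntegrableOn T (Icc s₁ s₂) := hT.1.integrableOn_isCompact isCompact_Icc
  have hgint : IntegrableOn (geninv s₁ s₂ T) (Icc s₁ s₂) :=
    (hT.monotoneOn_geninv hs).integrableOn_isCompact isCompact_Icc
  have harea : ∫ x in s₁..s₂, (T x - s₁) = ∫ t in s₁..s₂, (s₂ - geninv s₁ s₂ T t) := by
    simp only [intervalIntegral.integral_of_le hs, ← integral_Icc_eq_integral_Ioc]
    rw [integral_eq_lintegral_of_nonneg_ae
        (ae_restrict_of_forall_mem measurableSet_Icc fun x hx => sub_nonneg.2 (hT.2.1 hx).1)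
        (hTint.aestronglyMeasurable.sub aestronglyMeasurable_const),
      integral_eq_lintegral_of_nonneg_ae
        (ae_restrict_of_forall_mem measurableSet_Icc fun t ht =>
          sub_nonneg.2 (geninv_mem_Icc hs (hT.2.2.2.symm ▸ ht.2)).2)
        (aestronglyMeasurable_const.sub hgint.aestronglyMeasurable),
      lintegral_sub_eq_lintegral_sub_geninv hs hT]
  rw [intervalIntegral.integral_sub (hT.1.intervalIntegrable_of_le hs) intervalIntegrable_const,
    intervalIntegral.integral_sub intervalIntegrable_const
      ((hT.monotoneOn_geninv hs).intervalIntegrable_of_le hs),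
    intervalIntegral.integral_const, intervalIntegral.integral_const, smul_eq_mul,
    smul_eq_mul] at harea
  linear_combination harea

end Young

/-- The L¹ distance between two transport maps equals the L¹ distance between their
generalized inverses. -/
theorem l1_distance_geninv (s₁ s₂ : ℝ) (hs : s₁ < s₂) (S T : ℝ → ℝ)
    (hS : IsTransport s₁ s₂ S) (hT : IsTransport s₁ s₂ T) :
    (∫ x in s₁..s₂, |S x - T x|) =
      ∫ x in s₁..s₂, |geninv s₁ s₂ S x - geninv s₁ s₂ T x| := by
  have hle : ∀ t ∈ uIcc s₁ s₂, t ≤ S s₂ ∧ t ≤ T s₂ := fun t ht => by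
    rw [uIcc_of_le hs.le] at ht
    exact ⟨hS.2.2.2.symm ▸ ht.2, hT.2.2.2.symm ▸ ht.2⟩
  have hsup : ∫ t in s₁..s₂, geninv s₁ s₂ (S ⊔ T) t =
      ∫ t in s₁..s₂, (geninv s₁ s₂ S ⊓ geninv s₁ s₂ T) t :=
    intervalIntegral.integral_congr fun t ht => geninv_sup hs.le (hle t ht).1 (hle t ht).2
  have hinf : ∫ t in s₁..s₂, geninv s₁ s₂ (S ⊓ T) t =
      ∫ t in s₁..s₂, (geninv s₁ s₂ S ⊔ geninv s₁ s₂ T) t :=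
    intervalIntegral.integral_congr fun t ht => geninv_inf hS.1 hT.1 hs.le (hle t ht).1 (hle t ht).2
  rw [intervalIntegral_abs_sub_eq (hS.1.intervalIntegrable_of_le hs.le)
      (hT.1.intervalIntegrable_of_le hs.le),
    intervalIntegral_abs_sub_eq ((hS.monotoneOn_geninv hs.le).intervalIntegrable_of_le hs.le)
      ((hT.monotoneOn_geninv hs.le).intervalIntegrable_of_le hs.le)]
  linarith [integral_add_integral_geninv hs.le (hS.sup hT),
    integral_add_integral_geninv hs.le (hS.inf hT)]

end ATM
end
end

section
/- Moment identification of the ATM(1) coefficient: let (T_i) be a stationary sequence of random elements of 𝒯 satisfying T_{i+1} = α⊙T_i ⊕ ε_{i+1} with 0≤α≤1, where ε_{i+1} is a random element of 𝒯 (jointly measurable) independent of T_i and with E[ε_{i+1}(y)] = y for all y∈𝒮. Then ∫_𝒮 E[(T_{i+1}(x)−x)(T_i(x)−x)] dx = α·∫_𝒮 E[(T_i(x)−x)²] dx; in particular, if ∫_𝒮 E[(T_i(x)−x)²] dx > 0 then α = ∫_𝒮 E[(T_{i+1}(x)−x)(T_i(x)−x)] dx / ∫_𝒮 E[(T_i(x)−x)²]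 dx. -/
open MeasureTheory ProbabilityTheory Filter Topology

noncomputable section

namespace ATM

variable {Ω : Type*}

/-!
For a fixed x put V = T_i(x) - x and Y = x + α V, so that T_{i+1}(x) = ε_{i+1}(Y) with Y a
function of T_i. Since ε_{i+1} is independent of T_i and has mean identity,
E[ε_{i+1}(Y) V] = E[Y V], whence E[(T_{i+1}(x) - x) V] = E[(Y - x) V] = α E[V²]; integrate in x.

The middle identity is clear when Y takes finitely many values, by splitting along them.
Evaluation at a random point is not measurable on the function space, so the general case
uses monotonicity of ε_{i+1}: rounding Y down and up to a grid of mesh d sandwiches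
E[ε_{i+1}(Y) V] (for V ≥ 0) between E[Y V] - d E[V] and E[Y V] + d E[V].
-/

open Set

section Grid

def gridFloor (a d t : ℝ) : ℝ := a + d * ⌊(t - a) / d⌋₊

def gridCeil (a b d t : ℝ) : ℝ := min (gridFloor a d t + d) b

lemma measurable_gridFloor (a d : ℝ) : Measurable (gridFloor a d) := by
  unfold gridFloor
  fun_prop

lemma measurable_gridCeil (a b d : ℝ) : Measurable (gridCeil a b d) :=
  ((measurable_gridFloor a d).add_const d).min measurable_const

lemma finite_image_gridFloor (a b : ℝ) {d : ℝ} (hd : 0 ≤ d) :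
    (gridFloor a d '' Icc a b).Finite := by
  refine ((finite_Iic ⌊(b - a) / d⌋₊).image fun k : ℕ => a + d * k).subset ?_
  rintro _ ⟨t, ht, rfl⟩
  exact ⟨_, Nat.floor_le_floor (div_le_div_of_nonneg_right (by linarith [ht.2]) hd), rfl⟩

lemma finite_image_gridCeil (a b : ℝ) {d : ℝ} (hd : 0 ≤ d) :
    (gridCeil a b d '' Icc a b).Finite := by
  rw [show gridCeil a b d = (fun s => min (s + d) b) ∘ gridFloor a d from rfl, image_comp]
  exact (finite_image_gridFloor a b hd).image _

variable {a b d t : ℝ}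

lemma gridFloor_spec (hd : 0 < d) (ht : t ∈ Icc a b) :
    gridFloor a d t ∈ Icc a b ∧ t - d ≤ gridFloor a d t ∧ gridFloor a d t ≤ t := by
  have hfloor := Nat.floor_le (div_nonneg (sub_nonneg.2 ht.1) hd.le)
  have hfloor' := (div_lt_iff₀ hd).1 (Nat.lt_floor_add_one ((t - a) / d))
  have hle : gridFloor a d t ≤ t := by
    rw [gridFloor]
    nlinarith [(le_div_iff₀ hd).1 hfloor]
  exact ⟨⟨le_add_of_nonneg_right (by positivity), hle.trans ht.2⟩,
    by rw [gridFloor]; linarith, hle⟩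

lemma gridCeil_spec (hd : 0 < d) (ht : t ∈ Icc a b) :
    gridCeil a b d t ∈ Icc a b ∧ t ≤ gridCeil a b d t ∧ gridCeil a b d t ≤ t + d := by
  obtain ⟨⟨hlo, -⟩, hsub, hle⟩ := gridFloor_spec hd ht
  exact ⟨⟨le_min (by linarith) (ht.1.trans ht.2), min_le_right _ _⟩,
    le_min (by linarith) ht.2, (min_le_left _ _).trans (by linarith)⟩

end Grid

section Evaluation

variable [MeasurableSpace Ω] {P : Measure Ω} {e : Ω → ℝ → ℝ}

lemma JM.measurable_apply (he : JM e) (c : ℝ) : Measurable fun ω => e ω c :=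
  he.comp (measurable_id.prodMk measurable_const)

lemma JM.measurable_apply_comp (he : JM e) {Y : Ω → ℝ} (hY : Measurable Y) :
    Measurable fun ω => e ω (Y ω) :=
  he.comp (measurable_id.prodMk hY)

lemma integrable_mul_of_mem_Icc {a b : ℝ} {f g : Ω → ℝ} (hf : AEStronglyMeasurable f P)
    (hfI : ∀ ω, f ω ∈ Icc a b) (hg : Integrable g P) : Integrable (fun ω => f ω * g ω) P :=
  hg.bdd_mul hf (ae_of_all _ fun ω => abs_le_max_abs_abs (hfI ω).1 (hfI ω).2)

lemma integral_eval_mul_eq_of_finite_range {W V : Ω → ℝ}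
    (hW : Measurable W) (hfin : (range W).Finite) (hV : Integrable V P)
    (he : ∀ c ∈ range W, Integrable (fun ω => e ω c) P)
    (hmean : ∀ c ∈ range W, ∫ ω, e ω c ∂P = c)
    (hindep : ∀ c ∈ range W, IndepFun (fun ω => e ω c) (fun ω => (W ω, V ω)) P) :
    ∫ ω, e ω (W ω) * V ω ∂P = ∫ ω, W ω * V ω ∂P := by
  classical
  set F := hfin.toFinset
  set V' : ℝ → Ω → ℝ := fun c => {ω | W ω = c}.indicator V
  have hV' : ∀ c, Integrable (V' c) P := fun c => hV.indicator (hW (measurableSet_singleton c))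
  have hind : ∀ c ∈ F, IndepFun (fun ω => e ω c) (V' c) P := fun c hc =>
    (hindep c (hfin.mem_toFinset.1 hc)).comp measurable_id
      (measurable_snd.indicator (measurable_fst (measurableSet_singleton c)))
  have hsplit : ∀ (g : Ω → ℝ → ℝ) ω, g ω (W ω) * V ω = ∑ c ∈ F, g ω c * V' c ω := by
    intro g ω
    simp only [V', indicator_apply, mem_ofPred_eq, mul_ite, mul_zero]
    rw [Finset.sum_ite_eq, if_pos (hfin.mem_toFinset.2 (mem_range_self ω))]
  calc ∫ ω, e ω (W ω) * V ω ∂P = ∫ ω, ∑ c ∈ F, e ω c * V' c ω ∂P := by simp_rw [hsplit e]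
    _ = ∑ c ∈ F, ∫ ω, e ω c * V' c ω ∂P :=
      integral_finsetSum _ fun c hc =>
        (hind c hc).integrable_mul (he c (hfin.mem_toFinset.1 hc)) (hV' c)
    _ = ∑ c ∈ F, ∫ ω, c * V' c ω ∂P := Finset.sum_congr rfl fun c hc => by
      rw [(hind c hc).integral_fun_mul_eq_mul_integral
        (he c (hfin.mem_toFinset.1 hc)).aestronglyMeasurable (hV' c).aestronglyMeasurable,
        hmean c (hfin.mem_toFinset.1 hc), integral_const_mul]
    _ = ∫ ω, ∑ c ∈ F, c * V' c ω ∂P :=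
      (integral_finsetSum _ fun c _ => (hV' c).const_mul c).symm
    _ = ∫ ω, W ω * V ω ∂P := by simp_rw [← hsplit fun _ c => c]

variable [IsProbabilityMeasure P] {s₁ s₂ : ℝ} {Y V : Ω → ℝ}

lemma integral_eval_comp_mul_eq {q : ℝ → ℝ} (hq : Measurable q)
    (hqfin : (q '' Icc s₁ s₂).Finite) (hqmaps : MapsTo q (Icc s₁ s₂) (Icc s₁ s₂)) (he : JM e)
    (hmaps : ∀ ω, MapsTo (e ω) (Icc s₁ s₂) (Icc s₁ s₂))
    (hmean : ∀ c ∈ Icc s₁ s₂, ∫ ω, e ω c ∂P = c)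
    (hY : Measurable Y) (hYI : ∀ ω, Y ω ∈ Icc s₁ s₂) (hV : Integrable V P)
    (hindep : ∀ c ∈ Icc s₁ s₂, IndepFun (fun ω => e ω c) (fun ω => (Y ω, V ω)) P) :
    ∫ ω, e ω (q (Y ω)) * V ω ∂P = ∫ ω, q (Y ω) * V ω ∂P := by
  have hrange : range (q ∘ Y) ⊆ Icc s₁ s₂ := range_subset_iff.2 fun ω => hqmaps (hYI ω)
  refine integral_eval_mul_eq_of_finite_range (hq.comp hY)
    (hqfin.subset (range_subset_iff.2 fun ω => mem_image_of_mem q (hYI ω))) hV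
    (fun c hc => Integrable.of_mem_Icc s₁ s₂ (he.measurable_apply c).aemeasurable
      (ae_of_all _ fun ω => hmaps ω (hrange hc)))
    (fun c hc => hmean c (hrange hc))
    (fun c hc => (hindep c (hrange hc)).comp measurable_id
      ((hq.comp measurable_fst).prodMk measurable_snd))

lemma abs_integral_eval_mul_sub_le {d : ℝ} (hd : 0 < d) (he : JM e)
    (hmono : ∀ ω, MonotoneOn (e ω) (Icc s₁ s₂))
    (hmaps : ∀ ω, MapsTo (e ω) (Icc s₁ s₂) (Icc s₁ s₂))
    (hmean : ∀ c ∈ Icc s₁ s₂, ∫ ω, e ω c ∂P = c)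
    (hY : Measurable Y) (hYI : ∀ ω, Y ω ∈ Icc s₁ s₂) (hV : Integrable V P) (hV0 : 0 ≤ V)
    (hindep : ∀ c ∈ Icc s₁ s₂, IndepFun (fun ω => e ω c) (fun ω => (Y ω, V ω)) P) :
    |∫ ω, e ω (Y ω) * V ω ∂P - ∫ ω, Y ω * V ω ∂P| ≤ d * ∫ ω, V ω ∂P := by
  have hint : ∀ {f : Ω → ℝ}, Measurable f → (∀ ω, f ω ∈ Icc s₁ s₂) →
      Integrable (fun ω => f ω * V ω) P :=
    fun hf hfI => integrable_mul_of_mem_Icc hf.aestronglyMeasurable hfI hV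
  have hevalY := hint (he.measurable_apply_comp hY) fun ω => hmaps ω (hYI ω)
  have hshift : ∀ r, ∫ ω, (Y ω + r) * V ω ∂P = ∫ ω, Y ω * V ω ∂P + r * ∫ ω, V ω ∂P := by
    intro r
    simp_rw [add_mul]
    rw [integral_add (hint hY hYI) (hV.const_mul r), integral_const_mul]
  have hshift_int : ∀ r, Integrable (fun ω => (Y ω + r) * V ω) P := fun r => by
    simp_rw [add_mul]
    exact (hint hY hYI).add (hV.const_mul r)
  set lo := gridFloor s₁ d
  set hi := gridCeil s₁ s₂ d
  have hlo ω := gridFloor_spec hd (hYI ω)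
  have hhi ω := gridCeil_spec hd (hYI ω)
  have hlo_meas : Measurable (lo ∘ Y) := (measurable_gridFloor _ _).comp hY
  have hhi_meas : Measurable (hi ∘ Y) := (measurable_gridCeil _ _ _).comp hY
  have upper : ∫ ω, e ω (Y ω) * V ω ∂P ≤ ∫ ω, (Y ω + d) * V ω ∂P :=
    calc _ ≤ ∫ ω, e ω (hi (Y ω)) * V ω ∂P :=
          integral_mono hevalY (hint (he.measurable_apply_comp hhi_meas)
            fun ω => hmaps ω (hhi ω).1) fun ω =>
            mul_le_mul_of_nonneg_right (hmono ω (hYI ω) (hhi ω).1 (hhi ω).2.1) (hV0 ω)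
      _ = ∫ ω, hi (Y ω) * V ω ∂P :=
          integral_eval_comp_mul_eq (measurable_gridCeil _ _ _) (finite_image_gridCeil _ _ hd.le)
            (fun t ht => (gridCeil_spec hd ht).1) he hmaps hmean hY hYI hV hindep
      _ ≤ _ := integral_mono (hint hhi_meas fun ω => (hhi ω).1) (hshift_int d) fun ω =>
          mul_le_mul_of_nonneg_right (hhi ω).2.2 (hV0 ω)
  have lower : ∫ ω, (Y ω + -d) * V ω ∂P ≤ ∫ ω, e ω (Y ω) * V ω ∂P :=
    calc _ ≤ ∫ ω, lo (Y ω) * V ω ∂P :=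
          integral_mono (hshift_int (-d)) (hint hlo_meas fun ω => (hlo ω).1) fun ω =>
            mul_le_mul_of_nonneg_right (by linarith [(hlo ω).2.1]) (hV0 ω)
      _ = ∫ ω, e ω (lo (Y ω)) * V ω ∂P :=
          (integral_eval_comp_mul_eq (measurable_gridFloor _ _) (finite_image_gridFloor _ _ hd.le)
            (fun t ht => (gridFloor_spec hd ht).1) he hmaps hmean hY hYI hV hindep).symm
      _ ≤ _ := integral_mono (hint (he.measurable_apply_comp hlo_meas)
            fun ω => hmaps ω (hlo ω).1) hevalY fun ω =>
            mul_le_mul_of_nonneg_right (hmono ω (hlo ω).1 (hYI ω) (hlo ω).2.2) (hV0 ω)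
  rw [hshift] at upper lower
  exact abs_sub_le_iff.2 ⟨by linarith, by linarith⟩

lemma integral_eval_mul_eq_of_nonneg (he : JM e) (hmono : ∀ ω, MonotoneOn (e ω) (Icc s₁ s₂))
    (hmaps : ∀ ω, MapsTo (e ω) (Icc s₁ s₂) (Icc s₁ s₂))
    (hmean : ∀ c ∈ Icc s₁ s₂, ∫ ω, e ω c ∂P = c)
    (hY : Measurable Y) (hYI : ∀ ω, Y ω ∈ Icc s₁ s₂) (hV : Integrable V P) (hV0 : 0 ≤ V)
    (hindep : ∀ c ∈ Icc s₁ s₂, IndepFun (fun ω => e ω c) (fun ω => (Y ω, V ω)) P) :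
    ∫ ω, e ω (Y ω) * V ω ∂P = ∫ ω, Y ω * V ω ∂P := by
  have hI : 0 ≤ ∫ ω, V ω ∂P := integral_nonneg hV0
  refine eq_of_abs_sub_nonpos (le_of_forall_pos_le_add fun ε hε => ?_)
  calc _ ≤ ε / (∫ ω, V ω ∂P + 1) * ∫ ω, V ω ∂P :=
        abs_integral_eval_mul_sub_le (by positivity) he hmono hmaps hmean hY hYI hV hV0 hindep
    _ ≤ ε / (∫ ω, V ω ∂P + 1) * (∫ ω, V ω ∂P + 1) := by gcongr; linarith
    _ = 0 + ε := by rw [div_mul_cancel₀ _ (by positivity), zero_add]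

lemma integral_eval_mul_eq (he : JM e) (hmono : ∀ ω, MonotoneOn (e ω) (Icc s₁ s₂))
    (hmaps : ∀ ω, MapsTo (e ω) (Icc s₁ s₂) (Icc s₁ s₂))
    (hmean : ∀ c ∈ Icc s₁ s₂, ∫ ω, e ω c ∂P = c)
    (hY : Measurable Y) (hYI : ∀ ω, Y ω ∈ Icc s₁ s₂) (hV : Integrable V P)
    (hindep : ∀ c ∈ Icc s₁ s₂, IndepFun (fun ω => e ω c) (fun ω => (Y ω, V ω)) P) :
    ∫ ω, e ω (Y ω) * V ω ∂P = ∫ ω, Y ω * V ω ∂P := by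
  have hpart : ∀ g : ℝ → ℝ, Measurable g → (∀ v, 0 ≤ g v) → Integrable (fun ω => g (V ω)) P →
      ∫ ω, e ω (Y ω) * g (V ω) ∂P = ∫ ω, Y ω * g (V ω) ∂P := fun g hg hg0 hgV =>
    integral_eval_mul_eq_of_nonneg he hmono hmaps hmean hY hYI hgV (fun ω => hg0 _)
      fun c hc => (hindep c hc).comp measurable_id (measurable_fst.prodMk (hg.comp measurable_snd))
  have hsplit : ∀ (f : Ω → ℝ), Integrable (fun ω => f ω * max (V ω) 0) P →
      Integrable (fun ω => f ω * max (-V ω) 0) P →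
      ∫ ω, f ω * V ω ∂P = ∫ ω, f ω * max (V ω) 0 ∂P - ∫ ω, f ω * max (-V ω) 0 ∂P :=
    fun f hpos hneg => by
      rw [← integral_sub hpos hneg]
      simp_rw [← mul_sub, max_zero_sub_max_neg_zero_eq_self]
  have hint : ∀ {f : Ω → ℝ} {g : Ω → ℝ}, Measurable f → (∀ ω, f ω ∈ Icc s₁ s₂) →
      Integrable g P → Integrable (fun ω => f ω * g ω) P :=
    fun hf hfI hg => integrable_mul_of_mem_Icc hf.aestronglyMeasurable hfI hg
  have hevalY := he.measurable_apply_comp hY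
  have hevalYI ω := hmaps ω (hYI ω)
  rw [hsplit _ (hint hevalY hevalYI hV.pos_part) (hint hevalY hevalYI hV.neg_part),
    hsplit _ (hint hY hYI hV.pos_part) (hint hY hYI hV.neg_part)]
  congr 1
  · exact hpart (fun v => max v 0) (by fun_prop) (fun _ => le_max_right _ _) hV.pos_part
  · exact hpart (fun v => max (-v) 0) (by fun_prop) (fun _ => le_max_right _ _) hV.neg_part

end Evaluation

lemma phi_apply_of_mem_Icc {s₁ s₂ α : ℝ} (hα : α ∈ Icc (0 : ℝ) 1) (e S : ℝ → ℝ) (x : ℝ) :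
    phi s₁ s₂ α e S x = e (x + α * (S x - x)) := by
  have habs : |α| ≤ 1 := abs_le.2 ⟨by linarith [hα.1], hα.2⟩
  rcases hα.1.eq_or_lt with rfl | h
  · simp [phi, odot, oneSmul]
  · simp [phi, odot, oneSmul, habs, h]

lemma integral_phi_sub_mul_sub [MeasurableSpace Ω] {P : Measure Ω} [IsProbabilityMeasure P]
    {s₁ s₂ α : ℝ} (hα : α ∈ Icc (0 : ℝ) 1) {S e : Ω → ℝ → ℝ} (hS : JM S) (he : JM e)
    (hSmaps : ∀ ω, MapsTo (S ω) (Icc s₁ s₂) (Icc s₁ s₂))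
    (hmono : ∀ ω, MonotoneOn (e ω) (Icc s₁ s₂))
    (hmaps : ∀ ω, MapsTo (e ω) (Icc s₁ s₂) (Icc s₁ s₂))
    (hmean : ∀ c ∈ Icc s₁ s₂, ∫ ω, e ω c ∂P = c) (hindep : IndepFun S e P)
    {x : ℝ} (hx : x ∈ Icc s₁ s₂) :
    ∫ ω, (phi s₁ s₂ α (e ω) (S ω) x - x) * (S ω x - x) ∂P = α * ∫ ω, (S ω x - x) ^ 2 ∂P := by
  set V : Ω → ℝ := fun ω => S ω x - x
  set Y : Ω → ℝ := fun ω => x + α * V ω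
  have hSx := hS.measurable_apply x
  have hY : Measurable Y := measurable_const.add (measurable_const.mul (hSx.sub_const x))
  have hYI : ∀ ω, Y ω ∈ Icc s₁ s₂ := fun ω => by
    obtain ⟨h₁, h₂⟩ := hSmaps ω hx
    constructor <;> nlinarith [hα.1, hα.2, hx.1, hx.2]
  have hV : Integrable V P :=
    (Integrable.of_mem_Icc s₁ s₂ hSx.aemeasurable (ae_of_all _ fun ω => hSmaps ω hx)).sub
      (integrable_const x)
  have hind : ∀ c ∈ Icc s₁ s₂, IndepFun (fun ω => e ω c) (fun ω => (Y ω, V ω)) P :=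
    fun c _ => hindep.symm.comp (measurable_pi_apply c)
      (ψ := fun f : ℝ → ℝ => (x + α * (f x - x), f x - x)) (by fun_prop)
  have hYV : Integrable (fun ω => Y ω * V ω) P :=
    integrable_mul_of_mem_Icc hY.aestronglyMeasurable hYI hV
  have heYV : Integrable (fun ω => e ω (Y ω) * V ω) P :=
    integrable_mul_of_mem_Icc (he.measurable_apply_comp hY).aestronglyMeasurable
      (fun ω => hmaps ω (hYI ω)) hV
  calc ∫ ω, (phi s₁ s₂ α (e ω) (S ω) x - x) * V ω ∂P
      = ∫ ω, e ω (Y ω) * V ω - x * V ω ∂P := by simp_rw [phi_apply_of_mem_Icc hα, sub_mul]; rfl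
    _ = ∫ ω, Y ω * V ω - x * V ω ∂P := by
      rw [integral_sub heYV (hV.const_mul x), integral_sub hYV (hV.const_mul x),
        integral_eval_mul_eq he hmono hmaps hmean hY hYI hV hind]
    _ = ∫ ω, α * V ω ^ 2 ∂P := by congr 1 with ω; ring
    _ = α * ∫ ω, V ω ^ 2 ∂P := integral_const_mul _ _

theorem atm1_moment_identification_general
    {Ω : Type*} [MeasurableSpace Ω] (P : Measure Ω) [IsProbabilityMeasure P]
    (s₁ s₂ : ℝ) (hs : s₁ < s₂) (α : ℝ) (hα : α ∈ Set.Icc (0 : ℝ) 1)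
    (T ε : ℤ → Ω → ℝ → ℝ)
    (hTmeas : ∀ i, JM (T i)) (hεmeas : ∀ i, JM (ε i))
    (hT : ∀ i ω, IsTransport s₁ s₂ (T i ω)) (hε : ∀ i ω, IsTransport s₁ s₂ (ε i ω))
    (hrec : ∀ (i : ℤ) (ω : Ω), T (i + 1) ω = phi s₁ s₂ α (ε (i + 1) ω) (T i ω))
    (hindep : ∀ i : ℤ, IndepFun (T i) (ε (i + 1)) P)
    (hmean : ∀ (i : ℤ), ∀ y ∈ Set.Icc s₁ s₂, (∫ ω, ε i ω y ∂P) = y) :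
    ∀ i : ℤ,
      (∫ x in s₁..s₂, ∫ ω, (T (i + 1) ω x - x) * (T i ω x - x) ∂P) =
        α * ∫ x in s₁..s₂, ∫ ω, (T i ω x - x) ^ 2 ∂P ∧
      ((0 < ∫ x in s₁..s₂, ∫ ω, (T i ω x - x) ^ 2 ∂P) →
        α = (∫ x in s₁..s₂, ∫ ω, (T (i + 1) ω x - x) * (T i ω x - x) ∂P) /
            (∫ x in s₁..s₂, ∫ ω, (T i ω x - x) ^ 2 ∂P)) := by
  intro i
  have hpoint : EqOn (fun x => ∫ ω, (T (i + 1) ω x - x) * (T i ω x - x) ∂P)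
      (fun x => α * ∫ ω, (T i ω x - x) ^ 2 ∂P) (uIcc s₁ s₂) := by
    rw [uIcc_of_le hs.le]
    intro x hx
    simp only [hrec i]
    exact integral_phi_sub_mul_sub hα (hTmeas i) (hεmeas (i + 1)) (fun ω => (hT i ω).2.1)
      (fun ω => (hε (i + 1) ω).1) (fun ω => (hε (i + 1) ω).2.1) (hmean (i + 1)) (hindep i) hx
  have hcov := (intervalIntegral.integral_congr (μ := volume) hpoint).trans
    (intervalIntegral.integral_const_mul _ _)
  exact ⟨hcov, fun hpos => by rw [hcov, mul_div_cancel_right₀ _ hpos.ne']⟩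

/-- Moment identification of the ATM(1) coefficient: for a stationary sequence satisfying
T_{i+1} = α ⊙ T_i ⊕ ε_{i+1} with 0 ≤ α ≤ 1, innovation independent of T_i and with
identity mean, ∫_𝒮 E[(T_{i+1}(x)-x)(T_i(x)-x)]dx = α ∫_𝒮 E[(T_i(x)-x)²]dx; in particular
α is identified as the corresponding ratio whenever the denominator is positive. -/
theorem atm1_moment_identification
    {Ω : Type*} [MeasurableSpace Ω] (P : Measure Ω) [IsProbabilityMeasure P]
    (s₁ s₂ : ℝ) (hs : s₁ < s₂) (α : ℝ) (hα : α ∈ Set.Icc (0 : ℝ) 1)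
    (T ε : ℤ → Ω → ℝ → ℝ)
    (hTmeas : ∀ i, JM (T i)) (hεmeas : ∀ i, JM (ε i))
    (hT : ∀ i ω, IsTransport s₁ s₂ (T i ω)) (hε : ∀ i ω, IsTransport s₁ s₂ (ε i ω))
    (hstat : Stationary P T)
    (hrec : ∀ (i : ℤ) (ω : Ω), T (i + 1) ω = phi s₁ s₂ α (ε (i + 1) ω) (T i ω))
    (hindep : ∀ i : ℤ, IndepFun (T i) (ε (i + 1)) P)
    (hmean : ∀ (i : ℤ), ∀ y ∈ Set.Icc s₁ s₂, (∫ ω, ε i ω y ∂P) = y) :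
    ∀ i : ℤ,
      (∫ x in s₁..s₂, ∫ ω, (T (i + 1) ω x - x) * (T i ω x - x) ∂P) =
        α * ∫ x in s₁..s₂, ∫ ω, (T i ω x - x) ^ 2 ∂P ∧
      ((0 < ∫ x in s₁..s₂, ∫ ω, (T i ω x - x) ^ 2 ∂P) →
        α = (∫ x in s₁..s₂, ∫ ω, (T (i + 1) ω x - x) * (T i ω x - x) ∂P) /
            (∫ x in s₁..s₂, ∫ ω, (T i ω x - x) ^ 2 ∂P)) :=
  atm1_moment_identification_general P s₁ s₂ hs α hα T ε hTmeas hεmeas hT hε hrec hindep hmean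

end ATM
end
end

section
/- Pointwise moment identification of the concurrent coefficient: let (T_i) be a stationary sequence of random elements of 𝒯 satisfying T_{i+1} = β⊛T_i ⊕ ε_{i+1}, where ε_{i+1} is a random element of 𝒯 (jointly measurable) independent of T_i with E[ε_{i+1}(y)] = y for all y∈𝒮. Then for every x∈𝒮 with 0≤β(x)≤1: E[(T_{i+1}(x)−x)(T_i(x)−x)] = β(x)·E[(T_i(x)−x)²]; in particular, if E[(T_i(x)−x)²] > 0 then β(x) = E[(T_{i+1}(x)−x)(T_i(x)−x)] / E[(T_i(x)−x)²]. -/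
open MeasureTheory ProbabilityTheory Filter Topology

noncomputable section

namespace ATM

variable {Ω : Type*}

/-!
Since `0 ≤ β x`, `T (i+1) x = ε(ξ)` where `ξ = x + β x (T i x - x) ∈ [s₁, s₂]` is a function of
`T i x`, so it suffices that `E[ε(ξ) w] = E[ξ w]` for integrable functions `w` of `T i x`.
Independence can only be used at fixed points `y` (evaluation is not measurable for the product
σ-algebra on `ℝ → ℝ`): when `ξ` takes finitely many values, the identity follows from it and
`E[ε(y)] = y`. In general, for `w ≥ 0`, rounding `ξ` up to a grid of mesh `δ` and using
monotonicity of `ε` gives `E[ε(ξ) w] ≤ E[ξ w] + δ E[w]`; the reverse inequality follows by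
applying this to the reflected map `y ↦ -ε(-y)`, and an arbitrary `w` is split as `w⁺ - w⁻`.
-/

open Set

section

variable {α : Type*} [MeasurableSpace Ω] [MeasurableSpace α] {P : Measure Ω}

lemma integrable_of_forall_mem_Icc [IsFiniteMeasure P] {s₁ s₂ : ℝ} {f : Ω → ℝ}
    (hf : Measurable f) (hfI : ∀ ω, f ω ∈ Icc s₁ s₂) : Integrable f P :=
  .of_bound hf.aestronglyMeasurable _
    (ae_of_all _ fun ω => abs_le_max_abs_abs (hfI ω).1 (hfI ω).2)

lemma integrable_mul_of_forall_mem_Icc {s₁ s₂ : ℝ} {f w : Ω → ℝ} (hw : Integrable w P)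
    (hf : Measurable f) (hfI : ∀ ω, f ω ∈ Icc s₁ s₂) : Integrable (fun ω => f ω * w ω) P :=
  hw.bdd_mul hf.aestronglyMeasurable
    (ae_of_all _ fun ω => abs_le_max_abs_abs (hfI ω).1 (hfI ω).2)

lemma le_ceil_div_mul {δ : ℝ} (hδ : 0 < δ) (t : ℝ) : t ≤ ⌈t / δ⌉ * δ :=
  (div_le_iff₀ hδ).1 (Int.le_ceil _)

lemma ceil_div_mul_lt {δ : ℝ} (hδ : 0 < δ) (t : ℝ) : ⌈t / δ⌉ * δ < t + δ := by
  have h := Int.ceil_lt_add_one (t / δ)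
  calc (⌈t / δ⌉ : ℝ) * δ < (t / δ + 1) * δ := mul_lt_mul_of_pos_right h hδ
    _ = t + δ := by field_simp

theorem integral_apply_mul_eq_of_finite_range [IsProbabilityMeasure P] {s₁ s₂ : ℝ}
    {e : Ω → ℝ → ℝ} (he : ∀ y, Measurable fun ω => e ω y)
    (he_maps : ∀ ω, MapsTo (e ω) (Icc s₁ s₂) (Icc s₁ s₂))
    (he_mean : ∀ y ∈ Icc s₁ s₂, ∫ ω, e ω y ∂P = y)
    {X : Ω → α} (hXm : Measurable X) (hX : ∀ y, IndepFun X (fun ω => e ω y) P)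
    {ψ v : α → ℝ} (hψm : Measurable ψ) (hψ : ∀ ω, ψ (X ω) ∈ Icc s₁ s₂)
    (hψfin : (range fun ω => ψ (X ω)).Finite) (hvm : Measurable v)
    (hv : Integrable (fun ω => v (X ω)) P) :
    ∫ ω, e ω (ψ (X ω)) * v (X ω) ∂P = ∫ ω, ψ (X ω) * v (X ω) ∂P := by
  classical
  set S := hψfin.toFinset
  set u : ℝ → α → ℝ := fun y a => if ψ a = y then v a else 0
  have hum (y : ℝ) : Measurable (u y) :=
    Measurable.ite (hψm (measurableSet_singleton y)) hvm measurable_const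
  have hu (y : ℝ) : Integrable (fun ω => u y (X ω)) P :=
    hv.mono ((hum y).comp hXm).aestronglyMeasurable
      (ae_of_all _ fun ω => by by_cases h : ψ (X ω) = y <;> simp [u, h])
  have hS (y : ℝ) (hy : y ∈ S) : y ∈ Icc s₁ s₂ := by
    obtain ⟨ω, rfl⟩ := hψfin.mem_toFinset.1 hy
    exact hψ ω
  have hsum (f : ℝ → ℝ) (ω : Ω) : f (ψ (X ω)) * v (X ω) = ∑ y ∈ S, u y (X ω) * f y := by
    have hmem : ψ (X ω) ∈ S := hψfin.mem_toFinset.2 ⟨ω, rfl⟩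
    simp [u, Finset.sum_ite_eq, hmem, mul_comm]
  calc ∫ ω, e ω (ψ (X ω)) * v (X ω) ∂P
      = ∫ ω, ∑ y ∈ S, u y (X ω) * e ω y ∂P :=
        integral_congr_ae (ae_of_all _ fun ω => hsum (e ω) ω)
    _ = ∑ y ∈ S, ∫ ω, u y (X ω) * y ∂P := by
      rw [integral_finsetSum S fun y hy => ?_]
      · refine Finset.sum_congr rfl fun y hy => ?_
        have hind : IndepFun (fun ω => u y (X ω)) (fun ω => e ω y) P :=
          (hX y).comp (hum y) measurable_id
        simpa only [Pi.mul_apply, he_mean y (hS y hy), integral_mul_const] using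
          hind.integral_mul_eq_mul_integral (hu y).aestronglyMeasurable
            (he y).aestronglyMeasurable
      · simpa only [mul_comm] using
          integrable_mul_of_forall_mem_Icc (hu y) (he y) fun ω => he_maps ω (hS y hy)
    _ = ∫ ω, ψ (X ω) * v (X ω) ∂P := by
      rw [← integral_finsetSum S fun y _ => (hu y).mul_const y]
      exact integral_congr_ae (ae_of_all _ fun ω => (hsum id ω).symm)

structure IsUnbiasedMonotoneMap (P : Measure Ω) (s₁ s₂ : ℝ) (e : Ω → ℝ → ℝ) : Prop where
  jointlyMeasurable : JM e
  mapsTo : ∀ ω, MapsTo (e ω) (Icc s₁ s₂) (Icc s₁ s₂)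
  monotoneOn : ∀ ω, MonotoneOn (e ω) (Icc s₁ s₂)
  integral_apply : ∀ y ∈ Icc s₁ s₂, ∫ ω, e ω y ∂P = y

namespace IsUnbiasedMonotoneMap

variable {s₁ s₂ : ℝ} {e : Ω → ℝ → ℝ}

lemma measurable_apply (he : IsUnbiasedMonotoneMap P s₁ s₂ e) {ξ : Ω → ℝ} (hξ : Measurable ξ) :
    Measurable fun ω => e ω (ξ ω) :=
  he.jointlyMeasurable.comp (measurable_id.prodMk hξ)

lemma neg (he : IsUnbiasedMonotoneMap P s₁ s₂ e) :
    IsUnbiasedMonotoneMap P (-s₂) (-s₁) (fun ω y => -e ω (-y)) where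
  jointlyMeasurable := (he.jointlyMeasurable.comp (measurable_fst.prodMk measurable_snd.neg)).neg
  mapsTo ω y hy := by
    obtain ⟨h₁, h₂⟩ := he.mapsTo ω ⟨le_neg_of_le_neg hy.2, neg_le_of_neg_le hy.1⟩
    exact ⟨neg_le_neg h₂, neg_le_neg h₁⟩
  monotoneOn ω y hy z hz hyz :=
    neg_le_neg (he.monotoneOn ω ⟨le_neg_of_le_neg hz.2, neg_le_of_neg_le hz.1⟩
      ⟨le_neg_of_le_neg hy.2, neg_le_of_neg_le hy.1⟩ (neg_le_neg hyz))
  integral_apply y hy := by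
    rw [integral_neg, he.integral_apply _ ⟨le_neg_of_le_neg hy.2, neg_le_of_neg_le hy.1⟩, neg_neg]

variable [IsProbabilityMeasure P] {X : Ω → α} {φ v : α → ℝ}

theorem integral_apply_mul_le (he : IsUnbiasedMonotoneMap P s₁ s₂ e) (hXm : Measurable X)
    (hX : ∀ y, IndepFun X (fun ω => e ω y) P) (hφm : Measurable φ)
    (hφ : ∀ ω, φ (X ω) ∈ Icc s₁ s₂) (hvm : Measurable v) (hv0 : ∀ ω, 0 ≤ v (X ω))
    (hv : Integrable (fun ω => v (X ω)) P) :
    ∫ ω, e ω (φ (X ω)) * v (X ω) ∂P ≤ ∫ ω, φ (X ω) * v (X ω) ∂P := by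
  set B := ∫ ω, φ (X ω) * v (X ω) ∂P
  have hφvm : Integrable (fun ω => φ (X ω) * v (X ω)) P :=
    integrable_mul_of_forall_mem_Icc hv (hφm.comp hXm) hφ
  have hgrid (δ : ℝ) (hδ : 0 < δ) :
      ∫ ω, e ω (φ (X ω)) * v (X ω) ∂P ≤ B + δ * ∫ ω, v (X ω) ∂P := by
    set ψ : α → ℝ := fun a => min s₂ (⌈φ a / δ⌉ * δ)
    have hψm : Measurable ψ := by fun_prop
    have hφψ (ω : Ω) : φ (X ω) ≤ ψ (X ω) := le_min (hφ ω).2 (le_ceil_div_mul hδ _)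
    have hψφ (ω : Ω) : ψ (X ω) ≤ φ (X ω) + δ :=
      (min_le_right _ _).trans (ceil_div_mul_lt hδ _).le
    have hψ (ω : Ω) : ψ (X ω) ∈ Icc s₁ s₂ := ⟨(hφ ω).1.trans (hφψ ω), min_le_left _ _⟩
    have hψfin : (range fun ω => ψ (X ω)).Finite := by
      refine ((Finset.Icc ⌈s₁ / δ⌉ ⌈s₂ / δ⌉).finite_toSet.image
        fun j : ℤ => min s₂ (j * δ)).subset ?_
      rintro _ ⟨ω, rfl⟩
      exact ⟨⌈φ (X ω) / δ⌉, Finset.mem_coe.2 (Finset.mem_Icc.2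
        ⟨Int.ceil_le_ceil (div_le_div_of_nonneg_right (hφ ω).1 hδ.le),
          Int.ceil_le_ceil (div_le_div_of_nonneg_right (hφ ω).2 hδ.le)⟩), rfl⟩
    have hψvm : Integrable (fun ω => ψ (X ω) * v (X ω)) P :=
      integrable_mul_of_forall_mem_Icc hv (hψm.comp hXm) hψ
    calc ∫ ω, e ω (φ (X ω)) * v (X ω) ∂P
        ≤ ∫ ω, e ω (ψ (X ω)) * v (X ω) ∂P :=
          integral_mono
            (integrable_mul_of_forall_mem_Icc hv (he.measurable_apply (hφm.comp hXm))
              fun ω => he.mapsTo ω (hφ ω))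
            (integrable_mul_of_forall_mem_Icc hv (he.measurable_apply (hψm.comp hXm))
              fun ω => he.mapsTo ω (hψ ω))
            fun ω => mul_le_mul_of_nonneg_right (he.monotoneOn ω (hφ ω) (hψ ω) (hφψ ω)) (hv0 ω)
      _ = ∫ ω, ψ (X ω) * v (X ω) ∂P :=
          integral_apply_mul_eq_of_finite_range
            (fun y => he.measurable_apply measurable_const) he.mapsTo he.integral_apply
            hXm hX hψm hψ hψfin hvm hv
      _ ≤ ∫ ω, (φ (X ω) * v (X ω) + δ * v (X ω)) ∂P :=
          integral_mono hψvm (hφvm.add (hv.const_mul δ)) fun ω => by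
            nlinarith [mul_le_mul_of_nonneg_right (hψφ ω) (hv0 ω)]
      _ = B + δ * ∫ ω, v (X ω) ∂P := by
          rw [integral_add hφvm (hv.const_mul δ), integral_const_mul]
  have hlim : Tendsto (fun δ => B + δ * ∫ ω, v (X ω) ∂P) (𝓝[>] 0) (𝓝 B) := by
    have := (tendsto_id (x := 𝓝 (0 : ℝ))).mul_const (∫ ω, v (X ω) ∂P) |>.const_add B
    simpa using this.mono_left nhdsWithin_le_nhds
  exact ge_of_tendsto hlim (eventually_nhdsWithin_of_forall hgrid)

theorem integral_apply_mul_eq_of_nonneg (he : IsUnbiasedMonotoneMap P s₁ s₂ e)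
    (hXm : Measurable X) (hX : ∀ y, IndepFun X (fun ω => e ω y) P) (hφm : Measurable φ)
    (hφ : ∀ ω, φ (X ω) ∈ Icc s₁ s₂) (hvm : Measurable v) (hv0 : ∀ ω, 0 ≤ v (X ω))
    (hv : Integrable (fun ω => v (X ω)) P) :
    ∫ ω, e ω (φ (X ω)) * v (X ω) ∂P = ∫ ω, φ (X ω) * v (X ω) ∂P := by
  refine le_antisymm (he.integral_apply_mul_le hXm hX hφm hφ hvm hv0 hv) ?_
  have h := he.neg.integral_apply_mul_le hXm
    (fun y => (hX (-y)).comp measurable_id measurable_neg) hφm.neg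
    (fun ω => ⟨neg_le_neg (hφ ω).2, neg_le_neg (hφ ω).1⟩) hvm hv0 hv
  simp only [Pi.neg_apply, neg_neg, neg_mul, integral_neg] at h
  linarith

theorem integral_apply_mul_eq (he : IsUnbiasedMonotoneMap P s₁ s₂ e)
    (hXm : Measurable X) (hX : ∀ y, IndepFun X (fun ω => e ω y) P) (hφm : Measurable φ)
    (hφ : ∀ ω, φ (X ω) ∈ Icc s₁ s₂) (hvm : Measurable v) (hv : Integrable (fun ω => v (X ω)) P) :
    ∫ ω, e ω (φ (X ω)) * v (X ω) ∂P = ∫ ω, φ (X ω) * v (X ω) ∂P := by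
  have hsplit {f : Ω → ℝ} (hf : Measurable f) (hfI : ∀ ω, f ω ∈ Icc s₁ s₂) :
      ∫ ω, f ω * v (X ω) ∂P =
        ∫ ω, f ω * max (v (X ω)) 0 ∂P - ∫ ω, f ω * max (-v (X ω)) 0 ∂P := by
    rw [← integral_sub (integrable_mul_of_forall_mem_Icc hv.pos_part hf hfI)
      (integrable_mul_of_forall_mem_Icc hv.neg_part hf hfI)]
    simp only [← mul_sub, max_zero_sub_max_neg_zero_eq_self]
  have hEX : Measurable fun ω => e ω (φ (X ω)) := he.measurable_apply (hφm.comp hXm)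
  rw [hsplit hEX fun ω => he.mapsTo ω (hφ ω),
    hsplit (f := fun ω => φ (X ω)) (hφm.comp hXm) hφ,
    he.integral_apply_mul_eq_of_nonneg hXm hX hφm hφ (hvm.max measurable_const)
      (fun _ => le_max_right _ _) hv.pos_part,
    he.integral_apply_mul_eq_of_nonneg (v := fun a => max (-v a) 0) hXm hX hφm hφ
      (hvm.neg.max measurable_const) (fun _ => le_max_right _ _) hv.neg_part]

theorem integral_apply_convexComb_sub_mul_sub (he : IsUnbiasedMonotoneMap P s₁ s₂ e)
    {X : Ω → ℝ} (hXm : Measurable X) (hX : ∀ y, IndepFun X (fun ω => e ω y) P)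
    (hXI : ∀ ω, X ω ∈ Icc s₁ s₂) {x c : ℝ} (hx : x ∈ Icc s₁ s₂) (hc₀ : 0 ≤ c) (hc₁ : c ≤ 1) :
    ∫ ω, (e ω (x + c * (X ω - x)) - x) * (X ω - x) ∂P = c * ∫ ω, (X ω - x) ^ 2 ∂P := by
  set φ : ℝ → ℝ := fun t => x + c * (t - x)
  have hφm : Measurable φ := by fun_prop
  have hφ (ω : Ω) : φ (X ω) ∈ Icc s₁ s₂ :=
    (convex_Icc s₁ s₂).add_smul_sub_mem hx (hXI ω) ⟨hc₀, hc₁⟩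
  have hw : Integrable (fun ω => X ω - x) P :=
    (integrable_of_forall_mem_Icc hXm hXI).sub (integrable_const x)
  have hsub {f : Ω → ℝ} (hf : Measurable f) (hfI : ∀ ω, f ω ∈ Icc s₁ s₂) :
      ∫ ω, (f ω - x) * (X ω - x) ∂P = ∫ ω, f ω * (X ω - x) ∂P - x * ∫ ω, (X ω - x) ∂P := by
    simp_rw [sub_mul _ x]
    rw [integral_sub (integrable_mul_of_forall_mem_Icc hw hf hfI) (hw.const_mul x),
      integral_const_mul]
  calc ∫ ω, (e ω (φ (X ω)) - x) * (X ω - x) ∂P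
      = ∫ ω, (φ (X ω) - x) * (X ω - x) ∂P := by
        rw [hsub (f := fun ω => e ω (φ (X ω))) (he.measurable_apply (hφm.comp hXm))
            fun ω => he.mapsTo ω (hφ ω),
          hsub (f := fun ω => φ (X ω)) (hφm.comp hXm) hφ,
          he.integral_apply_mul_eq (v := fun t => t - x) hXm hX hφm hφ (by fun_prop) hw]
    _ = c * ∫ ω, (X ω - x) ^ 2 ∂P := by
        rw [← integral_const_mul]
        congr 1 with ω
        ring

end IsUnbiasedMonotoneMap

end

lemma bsmul_apply_of_nonneg (s₁ s₂ : ℝ) {β : ℝ → ℝ} (T : ℝ → ℝ) {x : ℝ} (hx : 0 ≤ β x) :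
    bsmul s₁ s₂ β T x = x + β x * (T x - x) := by
  rcases hx.lt_or_eq with h | h
  · simp [bsmul, h]
  · simp [bsmul, ← h]

theorem cat_moment_identification_general
    {Ω : Type*} [MeasurableSpace Ω] (P : Measure Ω) [IsProbabilityMeasure P]
    (s₁ s₂ : ℝ) (β : ℝ → ℝ)
    (T ε : ℤ → Ω → ℝ → ℝ)
    (hTmeas : ∀ i, JM (T i)) (hεmeas : ∀ i, JM (ε i))
    (hT : ∀ i ω, IsTransport s₁ s₂ (T i ω)) (hε : ∀ i ω, IsTransport s₁ s₂ (ε i ω))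
    (hrec : ∀ (i : ℤ) (ω : Ω), T (i + 1) ω = cphi s₁ s₂ β (ε (i + 1) ω) (T i ω))
    (hindep : ∀ i : ℤ, IndepFun (T i) (ε (i + 1)) P)
    (hmean : ∀ (i : ℤ), ∀ y ∈ Set.Icc s₁ s₂, (∫ ω, ε i ω y ∂P) = y) :
    ∀ i : ℤ, ∀ x ∈ Set.Icc s₁ s₂, 0 ≤ β x → β x ≤ 1 →
      (∫ ω, (T (i + 1) ω x - x) * (T i ω x - x) ∂P) =
        β x * ∫ ω, (T i ω x - x) ^ 2 ∂P ∧
      ((0 < ∫ ω, (T i ω x - x) ^ 2 ∂P) →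
        β x = (∫ ω, (T (i + 1) ω x - x) * (T i ω x - x) ∂P) /
            (∫ ω, (T i ω x - x) ^ 2 ∂P)) := by
  intro i x hx hβ₀ hβ₁
  have he : IsUnbiasedMonotoneMap P s₁ s₂ (ε (i + 1)) :=
    ⟨hεmeas _, fun ω => (hε _ ω).2.1, fun ω => (hε _ ω).1, hmean _⟩
  have hstep (ω : Ω) : T (i + 1) ω x = ε (i + 1) ω (x + β x * (T i ω x - x)) := by
    rw [hrec, cphi, Function.comp_apply, bsmul_apply_of_nonneg _ _ _ hβ₀]
  have hcov : ∫ ω, (T (i + 1) ω x - x) * (T i ω x - x) ∂P =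
      β x * ∫ ω, (T i ω x - x) ^ 2 ∂P := by
    simp_rw [hstep]
    exact he.integral_apply_convexComb_sub_mul_sub
      ((hTmeas i).comp (measurable_id.prodMk measurable_const))
      (fun y => (hindep i).comp (measurable_pi_apply x) (measurable_pi_apply y))
      (fun ω => (hT i ω).2.1 hx) hx hβ₀ hβ₁
  exact ⟨hcov, fun hpos => by rw [hcov, mul_div_cancel_right₀ _ hpos.ne']⟩

/-- Pointwise moment identification of the concurrent coefficient: for a stationary sequence
satisfying T_{i+1} = β ⊛ T_i ⊕ ε_{i+1} with innovation independent of T_i and identity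
mean, at every x with 0 ≤ β(x) ≤ 1 one has
E[(T_{i+1}(x)-x)(T_i(x)-x)] = β(x) E[(T_i(x)-x)²]; in particular β(x) is identified as the
corresponding ratio whenever the denominator is positive. -/
theorem cat_moment_identification
    {Ω : Type*} [MeasurableSpace Ω] (P : Measure Ω) [IsProbabilityMeasure P]
    (s₁ s₂ : ℝ) (hs : s₁ < s₂) (β : ℝ → ℝ)
    (hβ : ∀ y ∈ Set.Icc s₁ s₂, β y ∈ Set.Icc (-1 : ℝ) 1)
    (T ε : ℤ → Ω → ℝ → ℝ)
    (hTmeas : ∀ i, JM (T i)) (hεmeas : ∀ i, JM (ε i))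
    (hT : ∀ i ω, IsTransport s₁ s₂ (T i ω)) (hε : ∀ i ω, IsTransport s₁ s₂ (ε i ω))
    (hstat : Stationary P T)
    (hrec : ∀ (i : ℤ) (ω : Ω), T (i + 1) ω = cphi s₁ s₂ β (ε (i + 1) ω) (T i ω))
    (hindep : ∀ i : ℤ, IndepFun (T i) (ε (i + 1)) P)
    (hmean : ∀ (i : ℤ), ∀ y ∈ Set.Icc s₁ s₂, (∫ ω, ε i ω y ∂P) = y) :
    ∀ i : ℤ, ∀ x ∈ Set.Icc s₁ s₂, 0 ≤ β x → β x ≤ 1 →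
      (∫ ω, (T (i + 1) ω x - x) * (T i ω x - x) ∂P) =
        β x * ∫ ω, (T i ω x - x) ^ 2 ∂P ∧
      ((0 < ∫ ω, (T i ω x - x) ^ 2 ∂P) →
        β x = (∫ ω, (T (i + 1) ω x - x) * (T i ω x - x) ∂P) /
            (∫ ω, (T i ω x - x) ^ 2 ∂P)) :=
  cat_moment_identification_general P s₁ s₂ β T ε hTmeas hεmeas hT hε hrec hindep hmean
end ATM
end
end

section
/- Lipschitz continuity of the autocovariance functional in the transports: for all S₁,S₂,T₁,T₂ ∈ 𝒯, |∫_𝒮 (S₁(x)−x)(T₁(x)−x) dx − ∫_𝒮 (S₂(x)−x)(T₂(x)−x) dx| ≤ (s₂−s₁)·(d₁(S₁,S₂) + d₁(T₁,T₂)). -/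
open MeasureTheory ProbabilityTheory Filter Topology

noncomputable section

namespace ATM

variable {Ω : Type*}

theorem abs_mul_sub_mul_le {a b c d L : ℝ} (hb : |b| ≤ L) (hc : |c| ≤ L) :
    |a * b - c * d| ≤ L * (|a - c| + |b - d|) :=
  calc |a * b - c * d| = |(a - c) * b + c * (b - d)| := by ring_nf
    _ ≤ |a - c| * |b| + |c| * |b - d| := by
        rw [← abs_mul, ← abs_mul]; exact abs_add_le _ _
    _ ≤ |a - c| * L + L * |b - d| := by gcongr
    _ = L * (|a - c| + |b - d|) := by ring

namespace IsTransport

variable {s₁ s₂ : ℝ} {S T : ℝ → ℝ}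

theorem abs_sub_le (hT : IsTransport s₁ s₂ T) {x : ℝ} (hx : x ∈ Set.Icc s₁ s₂) :
    |T x - x| ≤ s₂ - s₁ := by
  have hTx := hT.2.1 hx
  rw [abs_sub_le_iff]
  constructor <;> linarith [hTx.1, hTx.2, hx.1, hx.2]

theorem intervalIntegrable (hs : s₁ ≤ s₂) (hT : IsTransport s₁ s₂ T) :
    IntervalIntegrable T volume s₁ s₂ :=
  MonotoneOn.intervalIntegrable (by rw [Set.uIcc_of_le hs]; exact hT.1)

theorem intervalIntegrable_abs_sub (hs : s₁ ≤ s₂) (hS : IsTransport s₁ s₂ S)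
    (hT : IsTransport s₁ s₂ T) : IntervalIntegrable (fun x => |S x - T x|) volume s₁ s₂ :=
  ((hS.intervalIntegrable hs).sub (hT.intervalIntegrable hs)).abs

theorem intervalIntegrable_sub_id_mul (hs : s₁ ≤ s₂) (hS : IsTransport s₁ s₂ S)
    (hT : IsTransport s₁ s₂ T) :
    IntervalIntegrable (fun x => (S x - x) * (T x - x)) volume s₁ s₂ := by
  have hS' := (hS.intervalIntegrable hs).sub intervalIntegral.intervalIntegrable_id
  have hT' := (hT.intervalIntegrable hs).sub intervalIntegral.intervalIntegrable_id
  rw [intervalIntegrable_iff_integrableOn_Ioc_of_le hs] at hS' hT' ⊢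
  exact hS'.mul_bdd hT'.aestronglyMeasurable <| ae_restrict_of_forall_mem measurableSet_Ioc
    fun x hx => (hT.abs_sub_le (Set.Ioc_subset_Icc_self hx)).trans_eq' (Real.norm_eq_abs _)

end IsTransport

/-- Lipschitz continuity of the autocovariance functional in the transports. -/
theorem autocovariance_functional_lipschitz (s₁ s₂ : ℝ) (hs : s₁ < s₂)
    (S₁ S₂ T₁ T₂ : ℝ → ℝ)
    (hS₁ : IsTransport s₁ s₂ S₁) (hS₂ : IsTransport s₁ s₂ S₂)
    (hT₁ : IsTransport s₁ s₂ T₁) (hT₂ : IsTransport s₁ s₂ T₂) :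
    |(∫ x in s₁..s₂, (S₁ x - x) * (T₁ x - x)) -
        ∫ x in s₁..s₂, (S₂ x - x) * (T₂ x - x)| ≤
      (s₂ - s₁) * (d1 s₁ s₂ S₁ S₂ + d1 s₁ s₂ T₁ T₂) := by
  have hle := hs.le
  have hdS := hS₁.intervalIntegrable_abs_sub hle hS₂
  have hdT := hT₁.intervalIntegrable_abs_sub hle hT₂
  rw [← intervalIntegral.integral_sub (hS₁.intervalIntegrable_sub_id_mul hle hT₁)
      (hS₂.intervalIntegrable_sub_id_mul hle hT₂), d1, d1,
    ← intervalIntegral.integral_add hdS hdT, ← intervalIntegral.integral_const_mul,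
    ← Real.norm_eq_abs]
  refine intervalIntegral.norm_integral_le_of_norm_le hle
    (ae_of_all _ fun x hx => ?_) ((hdS.add hdT).const_mul _)
  have hx' := Set.Ioc_subset_Icc_self hx
  simpa only [Real.norm_eq_abs, sub_sub_sub_cancel_right] using
    abs_mul_sub_mul_le (a := S₁ x - x) (d := T₂ x - x) (hT₁.abs_sub_le hx')
      (hS₂.abs_sub_le hx')

end ATM
end
end

section
/- Lipschitz stability of two-fold transport combinations for bi-Lipschitz transports (key estimate in the proof of Theorem 4): for every K≥1 and c>0 there exists a constant C = C(K,c,s₁,s₂) such that for all α₁,α₂ ∈ [−c,c] and all T₁,T₂,T₁′,T₂′ ∈ 𝒯 that are strictly increasing, differentiable and bi-Lipschitz with constant K, one has d₁(α₂⊙T₂ ⊕ α₁⊙T₁, α₂⊙T₂′ ⊕ α₁⊙T₁′) ≤ C·(d₁(T₁,T₁′) + d₁(T₂,T₂′)). -/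
open MeasureTheory ProbabilityTheory Filter Topology

noncomputable section

namespace ATM

variable {Ω : Type*}

/-! Writing `|α| ≤ n`, the map `α ⊙ T` is `(a ⊙ U) ∘ U^[b]` with `U ∈ {T, T⁻¹}`, `a ∈ [0, 1]` and
`b ≤ n`, hence `K^(n+1)`-bi-Lipschitz. Two estimates control `d₁` under composition:
`d₁(g ∘ S, g ∘ S') ≤ L d₁(S, S')` for `L`-Lipschitz `g`, and `d₁(g ∘ S, g' ∘ S) ≤ K d₁(g, g')`
when `S⁻¹` is `K`-Lipschitz, since then `S` pushes Lebesgue measure on `[s₁, s₂]` forward to at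
most `K` times itself (the image of a set under `S⁻¹` has at most `K` times its measure).
Together with `d₁(a ⊙ T, a ⊙ T') = a d₁(T, T')` and `d₁(T⁻¹, T'⁻¹) ≤ K² d₁(T, T')`, the triangle
inequality through the mixed composite bounds every step, and hence the two-fold chain. -/

open Set Function

theorem map_volume_restrict_Icc_le {S : ℝ → ℝ} {a b K : ℝ} (hK : 0 ≤ K)
    (hS : ContinuousOn S (Icc a b)) (hmaps : MapsTo S (Icc a b) (Icc a b))
    (hanti : ∀ x ∈ Icc a b, ∀ y ∈ Icc a b, |x - y| ≤ K * |S x - S y|) :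
    (volume.restrict (Icc a b)).map S ≤ ENNReal.ofReal K • volume.restrict (Icc a b) := by
  have hinj : InjOn S (Icc a b) := fun x hx y hy hxy => by
    have := hanti x hx y hy
    rw [hxy, sub_self, abs_zero, mul_zero] at this
    exact sub_eq_zero.1 (abs_nonpos_iff.1 this)
  rw [Measure.le_iff]
  intro A hA
  rw [Measure.map_apply_of_aemeasurable (hS.aemeasurable measurableSet_Icc) hA,
    Measure.restrict_apply' measurableSet_Icc, Measure.smul_apply,
    Measure.restrict_apply hA, smul_eq_mul]
  set E := S ⁻¹' A ∩ Icc a b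
  have hE : E ⊆ Icc a b := inter_subset_right
  have hinv : LipschitzOnWith K.toNNReal (invFunOn S (Icc a b)) (S '' E) := by
    refine LipschitzOnWith.of_dist_le_mul ?_
    rintro _ ⟨x, hx, rfl⟩ _ ⟨y, hy, rfl⟩
    rw [hinj.leftInvOn_invFunOn (hE hx), hinj.leftInvOn_invFunOn (hE hy), Real.dist_eq,
      Real.dist_eq, Real.coe_toNNReal _ hK]
    exact hanti x (hE hx) y (hE hy)
  calc volume E = volume (invFunOn S (Icc a b) '' (S '' E)) := by
        rw [(hinj.leftInvOn_invFunOn.mono hE).image_image]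
    _ ≤ ENNReal.ofReal K * volume (S '' E) := by
        simpa [← hausdorffMeasure_real, ENNReal.ofReal] using
          hinv.hausdorffMeasure_image_le zero_le_one
    _ ≤ ENNReal.ofReal K * volume (A ∩ Icc a b) := by
        gcongr
        rintro _ ⟨x, ⟨hxA, hx⟩, rfl⟩
        exact ⟨hxA, hmaps hx⟩

theorem integral_comp_le_mul_integral {S f : ℝ → ℝ} {a b K : ℝ} (hab : a ≤ b) (hK : 0 ≤ K)
    (hS : ContinuousOn S (Icc a b)) (hmaps : MapsTo S (Icc a b) (Icc a b))
    (hanti : ∀ x ∈ Icc a b, ∀ y ∈ Icc a b, |x - y| ≤ K * |S x - S y|)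
    (hf : IntervalIntegrable f volume a b) (hf0 : ∀ x ∈ Icc a b, 0 ≤ f x) :
    ∫ x in a..b, f (S x) ≤ K * ∫ x in a..b, f x := by
  have hmap := map_volume_restrict_Icc_le hK hS hmaps hanti
  have hfI : IntegrableOn f (Icc a b) := (intervalIntegrable_iff_integrableOn_Icc_of_le hab).1 hf
  rw [intervalIntegral.integral_of_le hab, intervalIntegral.integral_of_le hab,
    ← integral_Icc_eq_integral_Ioc, ← integral_Icc_eq_integral_Ioc,
    ← integral_map (hS.aemeasurable measurableSet_Icc)
      (hfI.aestronglyMeasurable.mono_ac (Measure.absolutelyContinuous_of_le_smul hmap))]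
  calc ∫ y, f y ∂(volume.restrict (Icc a b)).map S
      ≤ ∫ y, f y ∂(ENNReal.ofReal K • volume.restrict (Icc a b)) :=
        integral_mono_measure hmap
          (Measure.ae_smul_measure ((ae_restrict_iff' measurableSet_Icc).2 (.of_forall hf0)) _)
          (hfI.smul_measure ENNReal.ofReal_ne_top)
    _ = K * ∫ x in Icc a b, f x := by
        rw [integral_smul_measure, ENNReal.toReal_ofReal hK, smul_eq_mul]

variable {s₁ s₂ K L a α : ℝ} {S S' T T' U U' f f' g g' : ℝ → ℝ}

theorem IsTransport.comp (hT : IsTransport s₁ s₂ T) (hU : IsTransport s₁ s₂ U) :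
    IsTransport s₁ s₂ (U ∘ T) :=
  ⟨hU.1.comp hT.1 hT.2.1, hU.2.1.comp hT.2.1, by simp [hT.2.2.1, hU.2.2.1],
    by simp [hT.2.2.2, hU.2.2.2]⟩

structure IsBiLipTransport (s₁ s₂ K : ℝ) (T : ℝ → ℝ) : Prop where
  isTransport : IsTransport s₁ s₂ T
  biLipschitzOn : BiLipschitzOn s₁ s₂ K T

namespace IsBiLipTransport

theorem monotoneOn (hT : IsBiLipTransport s₁ s₂ K T) : MonotoneOn T (Icc s₁ s₂) :=
  hT.isTransport.1

theorem mapsTo (hT : IsBiLipTransport s₁ s₂ K T) : MapsTo T (Icc s₁ s₂) (Icc s₁ s₂) :=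
  hT.isTransport.2.1

theorem map_left (hT : IsBiLipTransport s₁ s₂ K T) : T s₁ = s₁ :=
  hT.isTransport.2.2.1

theorem map_right (hT : IsBiLipTransport s₁ s₂ K T) : T s₂ = s₂ :=
  hT.isTransport.2.2.2

theorem sub_le (hT : IsBiLipTransport s₁ s₂ K T) {x y : ℝ} (hx : x ∈ Icc s₁ s₂)
    (hy : y ∈ Icc s₁ s₂) (hxy : x ≤ y) :
    K⁻¹ * (y - x) ≤ T y - T x ∧ T y - T x ≤ K * (y - x) := by
  have hT' := hT.biLipschitzOn y hy x hx
  rwa [abs_of_nonneg (sub_nonneg.2 hxy), abs_of_nonneg (sub_nonneg.2 (hT.monotoneOn hx hy hxy))]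
    at hT'

end IsBiLipTransport

theorem isBiLipTransport_of_sub_le (hK : 0 < K) (h₁ : T s₁ = s₁) (h₂ : T s₂ = s₂)
    (h : ∀ x ∈ Icc s₁ s₂, ∀ y ∈ Icc s₁ s₂, x ≤ y →
      K⁻¹ * (y - x) ≤ T y - T x ∧ T y - T x ≤ K * (y - x)) :
    IsBiLipTransport s₁ s₂ K T := by
  have hmono : MonotoneOn T (Icc s₁ s₂) := fun x hx y hy hxy => by
    have := (h x hx y hy hxy).1
    have : 0 ≤ K⁻¹ * (y - x) := mul_nonneg (inv_nonneg.2 hK.le) (sub_nonneg.2 hxy)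
    linarith
  refine ⟨⟨hmono, fun x hx => ?_, h₁, h₂⟩, fun x hx y hy => ?_⟩
  · exact ⟨h₁ ▸ hmono ⟨le_rfl, hx.1.trans hx.2⟩ hx hx.1,
      h₂ ▸ hmono hx ⟨hx.1.trans hx.2, le_rfl⟩ hx.2⟩
  · rcases le_total x y with hxy | hyx
    · rw [abs_sub_comm x, abs_sub_comm (T x), abs_of_nonneg (sub_nonneg.2 hxy),
        abs_of_nonneg (sub_nonneg.2 (hmono hx hy hxy))]
      exact h x hx y hy hxy
    · rw [abs_of_nonneg (sub_nonneg.2 hyx), abs_of_nonneg (sub_nonneg.2 (hmono hy hx hyx))]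
      exact h y hy x hx hyx

theorem isBiLipTransport_id (hK : 1 ≤ K) : IsBiLipTransport s₁ s₂ K id :=
  isBiLipTransport_of_sub_le (by linarith) rfl rfl fun x _ y _ hxy =>
    ⟨mul_le_of_le_one_left (sub_nonneg.2 hxy) (inv_le_one_of_one_le₀ hK),
      le_mul_of_one_le_left (sub_nonneg.2 hxy) hK⟩

namespace IsBiLipTransport

theorem mono (hT : IsBiLipTransport s₁ s₂ K T) (hK : 0 < K) (hKL : K ≤ L) :
    IsBiLipTransport s₁ s₂ L T :=
  ⟨hT.isTransport, fun x hx y hy =>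
    ⟨le_trans (by gcongr) (hT.biLipschitzOn x hx y hy).1,
      (hT.biLipschitzOn x hx y hy).2.trans (by gcongr)⟩⟩

theorem comp (hT : IsBiLipTransport s₁ s₂ K T) (hU : IsBiLipTransport s₁ s₂ L U)
    (hK : 0 < K) (hL : 0 < L) : IsBiLipTransport s₁ s₂ (K * L) (U ∘ T) := by
  refine isBiLipTransport_of_sub_le (by positivity) (by simp [hT.map_left, hU.map_left])
    (by simp [hT.map_right, hU.map_right]) fun x hx y hy hxy => ?_
  obtain ⟨hT₁, hT₂⟩ := hT.sub_le hx hy hxy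
  obtain ⟨hU₁, hU₂⟩ := hU.sub_le (hT.mapsTo hx) (hT.mapsTo hy) (hT.monotoneOn hx hy hxy)
  simp only [comp_apply, mul_inv]
  constructor
  · calc K⁻¹ * L⁻¹ * (y - x) = L⁻¹ * (K⁻¹ * (y - x)) := by ring
      _ ≤ L⁻¹ * (T y - T x) := by gcongr
      _ ≤ U (T y) - U (T x) := hU₁
  · calc U (T y) - U (T x) ≤ L * (T y - T x) := hU₂
      _ ≤ L * (K * (y - x)) := by gcongr
      _ = K * L * (y - x) := by ring

theorem iterate (hT : IsBiLipTransport s₁ s₂ K T) (hK : 1 ≤ K) :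
    ∀ b : ℕ, IsBiLipTransport s₁ s₂ (K ^ b) T^[b]
  | 0 => isBiLipTransport_id le_rfl
  | b + 1 => by
    rw [iterate_succ', pow_succ]
    exact (hT.iterate hK b).comp hT (by positivity) (by linarith)

theorem continuousOn (hT : IsBiLipTransport s₁ s₂ K T) (hK : 0 ≤ K) :
    ContinuousOn T (Icc s₁ s₂) :=
  (LipschitzOnWith.of_dist_le_mul (K := K.toNNReal) fun x hx y hy => by
    simpa [Real.dist_eq, Real.coe_toNNReal _ hK] using (hT.biLipschitzOn x hx y hy).2).continuousOn

theorem strictMonoOn (hT : IsBiLipTransport s₁ s₂ K T) (hK : 0 < K) :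
    StrictMonoOn T (Icc s₁ s₂) := fun x hx y hy hxy => by
  have := (hT.sub_le hx hy hxy.le).1
  have : 0 < K⁻¹ * (y - x) := mul_pos (inv_pos.2 hK) (sub_pos.2 hxy)
  linarith

theorem surjOn (hT : IsBiLipTransport s₁ s₂ K T) (hs : s₁ ≤ s₂) (hK : 0 ≤ K) :
    SurjOn T (Icc s₁ s₂) (Icc s₁ s₂) := by
  have := intermediate_value_Icc hs (hT.continuousOn hK)
  rwa [hT.map_left, hT.map_right] at this

theorem geninv_apply (hT : IsBiLipTransport s₁ s₂ K T) (hK : 0 < K) {y : ℝ}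
    (hy : y ∈ Icc s₁ s₂) : geninv s₁ s₂ T (T y) = y :=
  IsLeast.csInf_eq ⟨⟨hy, le_rfl⟩, fun _ hz => ((hT.strictMonoOn hK).le_iff_le hy hz.1).1 hz.2⟩

theorem geninv (hT : IsBiLipTransport s₁ s₂ K T) (hs : s₁ ≤ s₂) (hK : 0 < K) :
    IsBiLipTransport s₁ s₂ K (geninv s₁ s₂ T) := by
  refine isBiLipTransport_of_sub_le hK ?_ ?_ fun x hx y hy hxy => ?_
  · simpa [hT.map_left] using hT.geninv_apply hK (left_mem_Icc.2 hs)
  · simpa [hT.map_right] using hT.geninv_apply hK (right_mem_Icc.2 hs)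
  obtain ⟨u, hu, rfl⟩ := hT.surjOn hs hK.le hx
  obtain ⟨v, hv, rfl⟩ := hT.surjOn hs hK.le hy
  rw [hT.geninv_apply hK hu, hT.geninv_apply hK hv]
  obtain ⟨h₁, h₂⟩ := hT.sub_le hu hv (((hT.strictMonoOn hK).le_iff_le hu hv).1 hxy)
  exact ⟨(inv_mul_le_iff₀ hK).2 h₂, (inv_mul_le_iff₀ hK).1 h₁⟩

end IsBiLipTransport

theorem oneSmul_of_nonneg (ha : 0 ≤ a) (T : ℝ → ℝ) :
    oneSmul s₁ s₂ a T = fun x => x + a * (T x - x) := by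
  funext x
  rcases ha.lt_or_eq with ha | rfl
  · simp [oneSmul, ha]
  · simp [oneSmul]

theorem IsBiLipTransport.oneSmul (hT : IsBiLipTransport s₁ s₂ K T) (hK : 1 ≤ K)
    (ha₀ : 0 ≤ a) (ha₁ : a ≤ 1) : IsBiLipTransport s₁ s₂ K (oneSmul s₁ s₂ a T) := by
  rw [oneSmul_of_nonneg ha₀]
  refine isBiLipTransport_of_sub_le (by linarith) (by simp [hT.map_left])
    (by simp [hT.map_right]) fun x hx y hy hxy => ?_
  obtain ⟨h₁, h₂⟩ := hT.sub_le hx hy hxy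
  have hKinv : K⁻¹ ≤ 1 := inv_le_one_of_one_le₀ hK
  have hyx : 0 ≤ (1 - a) * (y - x) := mul_nonneg (sub_nonneg.2 ha₁) (sub_nonneg.2 hxy)
  -- the increment is the convex combination `(1 - a) (y - x) + a (T y - T x)`
  constructor <;> nlinarith

theorem odot_of_nonpos (hα : α ≤ 0) (T : ℝ → ℝ) :
    odot s₁ s₂ α T = odot s₁ s₂ (-α) (geninv s₁ s₂ T) := by
  rcases hα.lt_or_eq with hα | rfl
  · have hneg : ¬ 0 < α := hα.not_gt
    unfold odot
    rw [abs_neg, abs_of_neg hα, if_neg hneg, if_pos (neg_pos.2 hα)]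
    split_ifs
    · funext x
      simp only [oneSmul, if_neg hneg, if_neg hα.ne, if_pos (neg_pos.2 hα)]
      ring
    · rfl
  · simp [odot, oneSmul_of_nonneg le_rfl]

theorem odot_of_nonneg (hα : 0 ≤ α) :
    ∃ a ∈ Icc (0 : ℝ) 1, ∃ b : ℕ, (b : ℝ) ≤ α ∧
      ∀ T : ℝ → ℝ, odot s₁ s₂ α T = oneSmul s₁ s₂ a T ∘ T^[b] := by
  by_cases h₁ : α ≤ 1
  · exact ⟨α, ⟨hα, h₁⟩, 0, by simpa using hα, fun T => by simp [odot, abs_of_nonneg hα, h₁]⟩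
  · have hpos : 0 < α := by linarith
    refine ⟨Int.fract α, ⟨Int.fract_nonneg α, (Int.fract_lt_one α).le⟩, ⌊α⌋.toNat, ?_,
      fun T => by simp [odot, abs_of_nonneg hα, h₁, hpos]⟩
    rw [Int.floor_toNat]
    exact Nat.floor_le hα

theorem IsBiLipTransport.odot (hT : IsBiLipTransport s₁ s₂ K T) (hs : s₁ ≤ s₂) (hK : 1 ≤ K)
    {n : ℕ} (hα : |α| ≤ n) : IsBiLipTransport s₁ s₂ (K ^ (n + 1)) (odot s₁ s₂ α T) := by
  have hK₀ : 0 < K := by linarith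
  wlog hα₀ : 0 ≤ α generalizing α T
  · rw [odot_of_nonpos (le_of_not_ge hα₀)]
    exact this (hT.geninv hs hK₀) (by rwa [abs_neg]) (by linarith)
  obtain ⟨a, ⟨ha₀, ha₁⟩, b, hb, hodot⟩ := odot_of_nonneg (s₁ := s₁) (s₂ := s₂) hα₀
  have hbn : b ≤ n := by exact_mod_cast hb.trans ((le_abs_self α).trans hα)
  rw [hodot]
  exact ((hT.iterate hK b).comp (hT.oneSmul hK ha₀ ha₁) (by positivity) hK₀).mono
    (by positivity) (by rw [← pow_succ]; exact pow_le_pow_right₀ hK (by omega))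

theorem intervalIntegrable_abs_sub (hs : s₁ ≤ s₂) (hf : MonotoneOn f (Icc s₁ s₂))
    (hg : MonotoneOn g (Icc s₁ s₂)) :
    IntervalIntegrable (fun x => |f x - g x|) volume s₁ s₂ := by
  rw [← uIcc_of_le hs] at hf hg
  exact (hf.intervalIntegrable.sub hg.intervalIntegrable).abs

theorem d1_nonneg (hs : s₁ ≤ s₂) (f g : ℝ → ℝ) : 0 ≤ d1 s₁ s₂ f g :=
  intervalIntegral.integral_nonneg hs fun _ _ => abs_nonneg _

theorem d1_le_mul_d1 (hs : s₁ ≤ s₂) (hf : MonotoneOn f (Icc s₁ s₂))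
    (hg : MonotoneOn g (Icc s₁ s₂)) (hf' : MonotoneOn f' (Icc s₁ s₂))
    (hg' : MonotoneOn g' (Icc s₁ s₂))
    (h : ∀ x ∈ Icc s₁ s₂, |f x - g x| ≤ L * |f' x - g' x|) :
    d1 s₁ s₂ f g ≤ L * d1 s₁ s₂ f' g' := by
  rw [d1, d1, ← intervalIntegral.integral_const_mul]
  exact intervalIntegral.integral_mono_on hs (intervalIntegrable_abs_sub hs hf hg)
    ((intervalIntegrable_abs_sub hs hf' hg').const_mul L) h

theorem d1_triangle (hs : s₁ ≤ s₂) {h : ℝ → ℝ} (hf : MonotoneOn f (Icc s₁ s₂))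
    (hg : MonotoneOn g (Icc s₁ s₂)) (hh : MonotoneOn h (Icc s₁ s₂)) :
    d1 s₁ s₂ f h ≤ d1 s₁ s₂ f g + d1 s₁ s₂ g h := by
  have hfg := intervalIntegrable_abs_sub hs hf hg
  have hgh := intervalIntegrable_abs_sub hs hg hh
  rw [d1, d1, d1, ← intervalIntegral.integral_add hfg hgh]
  exact intervalIntegral.integral_mono_on hs (intervalIntegrable_abs_sub hs hf hh)
    (hfg.add hgh) fun x _ => abs_sub_le _ _ _

theorem d1_comp_right_le (hs : s₁ ≤ s₂) (hK : 0 < K) (hg : MonotoneOn g (Icc s₁ s₂))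
    (hg' : MonotoneOn g' (Icc s₁ s₂)) (hS : IsBiLipTransport s₁ s₂ K S) :
    d1 s₁ s₂ (g ∘ S) (g' ∘ S) ≤ K * d1 s₁ s₂ g g' :=
  integral_comp_le_mul_integral hs hK.le (hS.continuousOn hK.le) hS.mapsTo
    (fun x hx y hy => (inv_mul_le_iff₀ hK).1 (hS.biLipschitzOn x hx y hy).1)
    (intervalIntegrable_abs_sub hs hg hg') fun _ _ => abs_nonneg _

theorem d1_comp_le (hs : s₁ ≤ s₂) (hK : 0 < K) (hg : IsBiLipTransport s₁ s₂ L g)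
    (hg' : IsTransport s₁ s₂ g') (hS : IsTransport s₁ s₂ S) (hS' : IsBiLipTransport s₁ s₂ K S') :
    d1 s₁ s₂ (g ∘ S) (g' ∘ S') ≤ L * d1 s₁ s₂ S S' + K * d1 s₁ s₂ g g' := by
  have hgS' := hS'.isTransport.comp hg.isTransport
  calc d1 s₁ s₂ (g ∘ S) (g' ∘ S')
      ≤ d1 s₁ s₂ (g ∘ S) (g ∘ S') + d1 s₁ s₂ (g ∘ S') (g' ∘ S') :=
        d1_triangle hs (hS.comp hg.isTransport).1 hgS'.1 (hS'.isTransport.comp hg').1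
    _ ≤ L * d1 s₁ s₂ S S' + K * d1 s₁ s₂ g g' := by
        gcongr
        · exact d1_le_mul_d1 hs (hS.comp hg.isTransport).1 hgS'.1 hS.1 hS'.monotoneOn
            fun x hx => (hg.biLipschitzOn _ (hS.2.1 hx) _ (hS'.mapsTo hx)).2
        · exact d1_comp_right_le hs hK hg.monotoneOn hg'.1 hS'

theorem d1_iterate_le (hs : s₁ ≤ s₂) (hK : 1 ≤ K) (hU : IsBiLipTransport s₁ s₂ K U)
    (hU' : IsBiLipTransport s₁ s₂ K U') :
    ∀ m : ℕ, d1 s₁ s₂ U^[m] U'^[m] ≤ m * K ^ m * d1 s₁ s₂ U U'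
  | 0 => by simp [d1]
  | m + 1 => by
    have hd := d1_nonneg hs U U'
    have hKm : K ^ m ≤ K ^ (m + 1) := pow_le_pow_right₀ hK m.le_succ
    rw [iterate_succ', iterate_succ']
    calc d1 s₁ s₂ (U ∘ U^[m]) (U' ∘ U'^[m])
        ≤ K * d1 s₁ s₂ U^[m] U'^[m] + K ^ m * d1 s₁ s₂ U U' :=
          d1_comp_le hs (by positivity) hU hU'.isTransport (hU.iterate hK m).isTransport
            (hU'.iterate hK m)
      _ ≤ K * (m * K ^ m * d1 s₁ s₂ U U') + K ^ (m + 1) * d1 s₁ s₂ U U' := by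
          gcongr
          exact d1_iterate_le hs hK hU hU' m
      _ = (m + 1 : ℕ) * K ^ (m + 1) * d1 s₁ s₂ U U' := by push_cast; ring

theorem d1_oneSmul (ha : 0 ≤ a) (U U' : ℝ → ℝ) :
    d1 s₁ s₂ (oneSmul s₁ s₂ a U) (oneSmul s₁ s₂ a U') = a * d1 s₁ s₂ U U' := by
  simp only [d1, oneSmul_of_nonneg ha, ← intervalIntegral.integral_const_mul]
  congr 1 with x
  rw [show x + a * (U x - x) - (x + a * (U' x - x)) = a * (U x - U' x) by ring, abs_mul,
    abs_of_nonneg ha]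

theorem d1_geninv_le (hs : s₁ ≤ s₂) (hK : 0 < K) (hT : IsBiLipTransport s₁ s₂ K T)
    (hT' : IsBiLipTransport s₁ s₂ K T') :
    d1 s₁ s₂ (geninv s₁ s₂ T) (geninv s₁ s₂ T') ≤ K ^ 2 * d1 s₁ s₂ T T' := by
  have hinv := hT.geninv hs hK
  have hinv' := hT'.geninv hs hK
  -- `|T⁻¹ x - T'⁻¹ x| ≤ K |T (T⁻¹ x) - T (T'⁻¹ x)| = K |T' (T'⁻¹ x) - T (T'⁻¹ x)|`
  have hpt : ∀ x ∈ Icc s₁ s₂, |geninv s₁ s₂ T x - geninv s₁ s₂ T' x| ≤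
      K * |(T ∘ geninv s₁ s₂ T') x - (T' ∘ geninv s₁ s₂ T') x| := by
    intro x hx
    obtain ⟨u, hu, hTu⟩ := hT.surjOn hs hK.le hx
    obtain ⟨v, hv, hT'v⟩ := hT'.surjOn hs hK.le hx
    have hinvu : geninv s₁ s₂ T x = u := by rw [← hTu, hT.geninv_apply hK hu]
    have hinvv : geninv s₁ s₂ T' x = v := by rw [← hT'v, hT'.geninv_apply hK hv]
    rw [comp_apply, comp_apply, hinvu, hinvv, hT'v, ← hTu, abs_sub_comm (T v)]
    exact (inv_mul_le_iff₀ hK).1 (hT.biLipschitzOn u hu v hv).1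
  calc d1 s₁ s₂ (geninv s₁ s₂ T) (geninv s₁ s₂ T')
      ≤ K * d1 s₁ s₂ (T ∘ geninv s₁ s₂ T') (T' ∘ geninv s₁ s₂ T') :=
        d1_le_mul_d1 hs hinv.monotoneOn hinv'.monotoneOn
          (hinv'.isTransport.comp hT.isTransport).1 (hinv'.isTransport.comp hT'.isTransport).1 hpt
    _ ≤ K * (K * d1 s₁ s₂ T T') := by
        gcongr
        exact d1_comp_right_le hs hK hT.monotoneOn hT'.monotoneOn hinv'
    _ = K ^ 2 * d1 s₁ s₂ T T' := by ring

theorem d1_odot_le_of_nonneg (hs : s₁ ≤ s₂) (hK : 1 ≤ K) {n : ℕ} (hα₀ : 0 ≤ α) (hα : α ≤ n)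
    (hT : IsBiLipTransport s₁ s₂ K T) (hT' : IsBiLipTransport s₁ s₂ K T') :
    d1 s₁ s₂ (odot s₁ s₂ α T) (odot s₁ s₂ α T') ≤ (n + 1) * K ^ (n + 1) * d1 s₁ s₂ T T' := by
  obtain ⟨a, ⟨ha₀, ha₁⟩, b, hb, hodot⟩ := odot_of_nonneg (s₁ := s₁) (s₂ := s₂) hα₀
  have hd := d1_nonneg hs T T'
  have hbn : b ≤ n := by exact_mod_cast hb.trans hα
  rw [hodot, hodot]
  calc d1 s₁ s₂ (oneSmul s₁ s₂ a T ∘ T^[b]) (oneSmul s₁ s₂ a T' ∘ T'^[b])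
      ≤ K * d1 s₁ s₂ T^[b] T'^[b] + K ^ b * d1 s₁ s₂ (oneSmul s₁ s₂ a T) (oneSmul s₁ s₂ a T') :=
        d1_comp_le hs (by positivity) (hT.oneSmul hK ha₀ ha₁) (hT'.oneSmul hK ha₀ ha₁).isTransport
          (hT.iterate hK b).isTransport (hT'.iterate hK b)
    _ ≤ K * (b * K ^ b * d1 s₁ s₂ T T') + K ^ b * (1 * d1 s₁ s₂ T T') := by
        rw [d1_oneSmul ha₀]
        gcongr
        exact d1_iterate_le hs hK hT hT' b
    _ = b * K ^ (b + 1) * d1 s₁ s₂ T T' + K ^ b * d1 s₁ s₂ T T' := by ring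
    _ ≤ n * K ^ (n + 1) * d1 s₁ s₂ T T' + K ^ (n + 1) * d1 s₁ s₂ T T' := by
        gcongr
        omega
    _ = (n + 1) * K ^ (n + 1) * d1 s₁ s₂ T T' := by ring

theorem d1_odot_le (hs : s₁ ≤ s₂) (hK : 1 ≤ K) {n : ℕ} (hα : |α| ≤ n)
    (hT : IsBiLipTransport s₁ s₂ K T) (hT' : IsBiLipTransport s₁ s₂ K T') :
    d1 s₁ s₂ (odot s₁ s₂ α T) (odot s₁ s₂ α T') ≤ (n + 1) * K ^ (n + 3) * d1 s₁ s₂ T T' := by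
  have hK₀ : 0 < K := by linarith
  have hd := d1_nonneg hs T T'
  rcases le_total 0 α with hα₀ | hα₀
  · calc d1 s₁ s₂ (odot s₁ s₂ α T) (odot s₁ s₂ α T')
        ≤ (n + 1) * K ^ (n + 1) * d1 s₁ s₂ T T' :=
          d1_odot_le_of_nonneg hs hK hα₀ ((le_abs_self α).trans hα) hT hT'
      _ ≤ (n + 1) * K ^ (n + 3) * d1 s₁ s₂ T T' := by
          gcongr
          norm_num
  · rw [odot_of_nonpos hα₀, odot_of_nonpos hα₀]
    calc d1 s₁ s₂ (odot s₁ s₂ (-α) (geninv s₁ s₂ T)) (odot s₁ s₂ (-α) (geninv s₁ s₂ T'))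
        ≤ (n + 1) * K ^ (n + 1) * d1 s₁ s₂ (geninv s₁ s₂ T) (geninv s₁ s₂ T') :=
          d1_odot_le_of_nonneg hs hK (neg_nonneg.2 hα₀) ((neg_le_abs α).trans hα)
            (hT.geninv hs hK₀) (hT'.geninv hs hK₀)
      _ ≤ (n + 1) * K ^ (n + 1) * (K ^ 2 * d1 s₁ s₂ T T') := by
          gcongr
          exact d1_geninv_le hs hK₀ hT hT'
      _ = (n + 1) * K ^ (n + 3) * d1 s₁ s₂ T T' := by ring

theorem twofold_chain_lipschitz_stability_general (s₁ s₂ : ℝ) (hs : s₁ < s₂)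
    (K c : ℝ) (hK : 1 ≤ K) :
    ∃ C : ℝ, ∀ α₁ ∈ Set.Icc (-c) c, ∀ α₂ ∈ Set.Icc (-c) c,
      ∀ T₁ T₂ T₁' T₂' : ℝ → ℝ,
        IsTransport s₁ s₂ T₁ → StrictMonoOn T₁ (Set.Icc s₁ s₂) →
        DifferentiableOn ℝ T₁ (Set.Icc s₁ s₂) → BiLipschitzOn s₁ s₂ K T₁ →
        IsTransport s₁ s₂ T₂ → StrictMonoOn T₂ (Set.Icc s₁ s₂) →
        DifferentiableOn ℝ T₂ (Set.Icc s₁ s₂) → BiLipschitzOn s₁ s₂ K T₂ →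
        IsTransport s₁ s₂ T₁' → StrictMonoOn T₁' (Set.Icc s₁ s₂) →
        DifferentiableOn ℝ T₁' (Set.Icc s₁ s₂) → BiLipschitzOn s₁ s₂ K T₁' →
        IsTransport s₁ s₂ T₂' → StrictMonoOn T₂' (Set.Icc s₁ s₂) →
        DifferentiableOn ℝ T₂' (Set.Icc s₁ s₂) → BiLipschitzOn s₁ s₂ K T₂' →
        d1 s₁ s₂ (oplus (odot s₁ s₂ α₂ T₂) (odot s₁ s₂ α₁ T₁))
            (oplus (odot s₁ s₂ α₂ T₂') (odot s₁ s₂ α₁ T₁')) ≤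
          C * (d1 s₁ s₂ T₁ T₁' + d1 s₁ s₂ T₂ T₂') := by
  set n := ⌈c⌉₊
  refine ⟨K ^ (n + 1) * ((n + 1) * K ^ (n + 3)), fun α₁ hα₁ α₂ hα₂ T₁ T₂ T₁' T₂' hT₁ _ _ hL₁
    hT₂ _ _ hL₂ hT₁' _ _ hL₁' hT₂' _ _ hL₂' => ?_⟩
  have hαn : ∀ α ∈ Icc (-c) c, |α| ≤ n := fun α hα => (abs_le.2 hα).trans (Nat.le_ceil c)
  have hKn : 0 < K ^ (n + 1) := by positivity
  have hodot : ∀ α ∈ Icc (-c) c, ∀ T, IsTransport s₁ s₂ T → BiLipschitzOn s₁ s₂ K T →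
      IsBiLipTransport s₁ s₂ (K ^ (n + 1)) (odot s₁ s₂ α T) :=
    fun α hα T hT hL => IsBiLipTransport.odot ⟨hT, hL⟩ hs.le hK (hαn α hα)
  calc _ ≤ K ^ (n + 1) * d1 s₁ s₂ (odot s₁ s₂ α₂ T₂) (odot s₁ s₂ α₂ T₂') +
        K ^ (n + 1) * d1 s₁ s₂ (odot s₁ s₂ α₁ T₁) (odot s₁ s₂ α₁ T₁') :=
        d1_comp_le hs.le hKn (hodot α₁ hα₁ T₁ hT₁ hL₁) (hodot α₁ hα₁ T₁' hT₁' hL₁').isTransport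
          (hodot α₂ hα₂ T₂ hT₂ hL₂).isTransport (hodot α₂ hα₂ T₂' hT₂' hL₂')
    _ ≤ K ^ (n + 1) * ((n + 1) * K ^ (n + 3) * d1 s₁ s₂ T₂ T₂') +
        K ^ (n + 1) * ((n + 1) * K ^ (n + 3) * d1 s₁ s₂ T₁ T₁') := by
        gcongr
        · exact d1_odot_le hs.le hK (hαn α₂ hα₂) ⟨hT₂, hL₂⟩ ⟨hT₂', hL₂'⟩
        · exact d1_odot_le hs.le hK (hαn α₁ hα₁) ⟨hT₁, hL₁⟩ ⟨hT₁', hL₁'⟩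
    _ = _ := by ring

/-- Lipschitz stability of two-fold transport combinations for bi-Lipschitz transports
(key estimate in the proof of Theorem 4): there is a constant C = C(K, c, s₁, s₂) such that
d₁(α₂ ⊙ T₂ ⊕ α₁ ⊙ T₁, α₂ ⊙ T₂′ ⊕ α₁ ⊙ T₁′) ≤ C (d₁(T₁, T₁′) + d₁(T₂, T₂′)) for all
α₁, α₂ ∈ [-c, c] and all strictly increasing, differentiable, K-bi-Lipschitz transports. -/
theorem twofold_chain_lipschitz_stability (s₁ s₂ : ℝ) (hs : s₁ < s₂)
    (K c : ℝ) (hK : 1 ≤ K) (hc : 0 < c) :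
    ∃ C : ℝ, ∀ α₁ ∈ Set.Icc (-c) c, ∀ α₂ ∈ Set.Icc (-c) c,
      ∀ T₁ T₂ T₁' T₂' : ℝ → ℝ,
        IsTransport s₁ s₂ T₁ → StrictMonoOn T₁ (Set.Icc s₁ s₂) →
        DifferentiableOn ℝ T₁ (Set.Icc s₁ s₂) → BiLipschitzOn s₁ s₂ K T₁ →
        IsTransport s₁ s₂ T₂ → StrictMonoOn T₂ (Set.Icc s₁ s₂) →
        DifferentiableOn ℝ T₂ (Set.Icc s₁ s₂) → BiLipschitzOn s₁ s₂ K T₂ →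
        IsTransport s₁ s₂ T₁' → StrictMonoOn T₁' (Set.Icc s₁ s₂) →
        DifferentiableOn ℝ T₁' (Set.Icc s₁ s₂) → BiLipschitzOn s₁ s₂ K T₁' →
        IsTransport s₁ s₂ T₂' → StrictMonoOn T₂' (Set.Icc s₁ s₂) →
        DifferentiableOn ℝ T₂' (Set.Icc s₁ s₂) → BiLipschitzOn s₁ s₂ K T₂' →
        d1 s₁ s₂ (oplus (odot s₁ s₂ α₂ T₂) (odot s₁ s₂ α₁ T₁))
            (oplus (odot s₁ s₂ α₂ T₂') (odot s₁ s₂ α₁ T₁')) ≤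
          C * (d1 s₁ s₂ T₁ T₁' + d1 s₁ s₂ T₂ T₂') :=
  twofold_chain_lipschitz_stability_general s₁ s₂ hs K c hK

end ATM
end
end
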